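/- arXiv:1805.10006 — 8 statements merged into one kernel-verified Lean document; each statement's English description precedes it below -/
import Mathlib

section
/- Let d ≥ 1, let 0 < ℓ ≤ 2R, and let e₁ denote the first standard basis vector of ℝ^d. Then the boost Λ_s maps the double cone D_{ℓ/2}((ℓ/2)·e₁) into the double cone D_R(R·e₁) if and only if |s| ≤ log(2R/ℓ). (In the paper's parametrization s = 2πt, this says the maximal modular flow time is exactly τ = (2π)^{-1} log(2R/ℓ).) -/
/-- The open double cone over the Euclidean ball of radius `r` centered at `c`
in the time-zero slice of `(1+d)`-dimensional Minkowski space. -/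
noncomputable def doubleCone (d : ℕ) (r : ℝ) (c : EuclideanSpace ℝ (Fin d)) :
    Set (ℝ × EuclideanSpace ℝ (Fin d)) :=
  {p | |p.1| + dist p.2 c < r}

/-- The boost `Λ_s` in the `(x⁰, x¹)`-plane. -/
noncomputable def boost (d : ℕ) [NeZero d] (s : ℝ) (p : ℝ × EuclideanSpace ℝ (Fin d)) :
    ℝ × EuclideanSpace ℝ (Fin d) :=
  (p.1 * Real.cosh s + p.2 0 * Real.sinh s,
    WithLp.toLp 2 (fun i => if i = 0 then p.1 * Real.sinh s + p.2 0 * Real.cosh s else p.2 i))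

/-!
In the light-cone coordinates `u = x¹ - x⁰`, `v = x¹ + x⁰` along the boost axis, with
`q = ‖x‖² - (x¹)²` the squared transverse part, the double cone `D_r(r e₁)` is the region
`0 < min u v`, `u v + q < 2 r min u v`. The boost `Λ_s` rescales `u ↦ e^{-s} u`,
`v ↦ e^s v` and fixes `q`, so `u v + q` is invariant while `min u v` shrinks at most by the
factor `e^{-|s|}`, with equality on the axis `u = v`. Hence `Λ_s D_r(r e₁) ⊆ D_R(R e₁)` iff
`r ≤ R e^{-|s|}`; the axis points `t e₁`, `0 < t < 2r`, show necessity.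
-/

open Real Set RealInnerProductSpace

section UnitVector

variable {E : Type*} [NormedAddCommGroup E] [InnerProductSpace ℝ E] {e : E}

lemma dist_smul_sq_of_norm_eq_one (he : ‖e‖ = 1) (x : E) (r : ℝ) :
    dist x (r • e) ^ 2 = (⟪x, e⟫ - r) ^ 2 + (‖x‖ ^ 2 - ⟪x, e⟫ ^ 2) := by
  rw [dist_eq_norm, norm_sub_sq_real, real_inner_smul_right, norm_smul, he, mul_one, norm_eq_abs,
    sq_abs]
  ring

lemma sq_inner_le_sq_norm_of_norm_eq_one (he : ‖e‖ = 1) (x : E) :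
    ⟪x, e⟫ ^ 2 ≤ ‖x‖ ^ 2 :=
  sq_le_sq.2 (by simpa [he] using abs_real_inner_le_norm x e)

lemma norm_add_smul_sq_sub_sq_inner (he : ‖e‖ = 1) (x : E) (a : ℝ) :
    ‖x + a • e‖ ^ 2 - ⟪x + a • e, e⟫ ^ 2 = ‖x‖ ^ 2 - ⟪x, e⟫ ^ 2 := by
  rw [norm_add_sq_real, inner_add_left, real_inner_smul_left, real_inner_smul_right, norm_smul,
    real_inner_self_eq_norm_sq, he, mul_one, norm_eq_abs, sq_abs]
  ring

end UnitVector

lemma abs_add_sqrt_lt_iff {r t x q : ℝ} (hq : 0 ≤ q) :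
    |t| + √((x - r) ^ 2 + q) < r ↔
      0 < min (x - t) (x + t) ∧ (x - t) * (x + t) + q < 2 * r * min (x - t) (x + t) := by
  have hmin : min (x - t) (x + t) = x - |t| := by
    rw [abs_eq_max_neg, ← min_sub_sub_left, sub_neg_eq_add]
  have hsq : (x - r) ^ 2 - (r - |t|) ^ 2 = (x - t) * (x + t) - 2 * r * (x - |t|) := by
    linear_combination (-1 : ℝ) * sq_abs t
  rw [hmin]
  constructor
  · intro h
    have ht : |t| < r := by linarith [sqrt_nonneg ((x - r) ^ 2 + q)]
    have h' := (sqrt_lt' (sub_pos.2 ht)).1 (lt_sub_iff_add_lt'.2 h)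
    -- if `x ≤ |t|`, then `x ≤ |t| < r` puts `x` farther from `r` than `|t|` is
    have hx : 0 < x - |t| := by
      by_contra hx
      nlinarith [abs_nonneg t]
    exact ⟨hx, by linarith⟩
  · rintro ⟨hx, h⟩
    have ht : |t| < r := by nlinarith [abs_nonneg t]
    rw [← lt_sub_iff_add_lt', sqrt_lt' (sub_pos.2 ht)]
    linarith

lemma min_exp_neg_mul_exp_mul (s t : ℝ) (ht : 0 ≤ t) :
    min (exp (-s) * t) (exp s * t) = exp (-|s|) * t := by
  rw [← min_mul_of_nonneg _ _ ht, ← exp_monotone.map_min, abs_eq_max_neg, ← min_neg_neg,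
    neg_neg, min_comm]

lemma exp_neg_abs_mul_min_le (s : ℝ) {u v : ℝ} (h : 0 ≤ min u v) :
    exp (-|s|) * min u v ≤ min (exp (-s) * u) (exp s * v) :=
  le_min
    (mul_le_mul (exp_le_exp.2 (neg_le_neg (le_abs_self s))) (min_le_left u v) h (exp_pos _).le)
    (mul_le_mul (exp_le_exp.2 (neg_abs_le s)) (min_le_right u v) h (exp_pos _).le)

section Boost

variable {d : ℕ} [NeZero d]

local notation "e₁" => EuclideanSpace.single (0 : Fin d) (1 : ℝ)

lemma inner_single_zero_one (x : EuclideanSpace ℝ (Fin d)) : ⟪x, e₁⟫ = x 0 := by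
  simp [EuclideanSpace.inner_single_right]

lemma mem_doubleCone_smul_single_iff {r : ℝ} {p : ℝ × EuclideanSpace ℝ (Fin d)} :
    p ∈ doubleCone d r (r • e₁) ↔
      0 < min (p.2 0 - p.1) (p.2 0 + p.1) ∧
        (p.2 0 - p.1) * (p.2 0 + p.1) + (‖p.2‖ ^ 2 - p.2 0 ^ 2) <
          2 * r * min (p.2 0 - p.1) (p.2 0 + p.1) := by
  have he : ‖e₁‖ = 1 := by simp
  rw [doubleCone, mem_ofPred_eq, ← sqrt_sq dist_nonneg, dist_smul_sq_of_norm_eq_one he,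
    inner_single_zero_one, abs_add_sqrt_lt_iff]
  rw [← inner_single_zero_one]
  exact sub_nonneg.2 (sq_inner_le_sq_norm_of_norm_eq_one he p.2)

lemma boost_snd_zero_sub_fst (s : ℝ) (p : ℝ × EuclideanSpace ℝ (Fin d)) :
    (boost d s p).2 0 - (boost d s p).1 = exp (-s) * (p.2 0 - p.1) := by
  simp only [boost, PiLp.toLp_apply, ↓reduceIte, ← cosh_sub_sinh]
  ring

lemma boost_snd_zero_add_fst (s : ℝ) (p : ℝ × EuclideanSpace ℝ (Fin d)) :
    (boost d s p).2 0 + (boost d s p).1 = exp s * (p.2 0 + p.1) := by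
  simp only [boost, PiLp.toLp_apply, ↓reduceIte, ← cosh_add_sinh]
  ring

lemma boost_snd_eq_add_smul_single (s : ℝ) (p : ℝ × EuclideanSpace ℝ (Fin d)) :
    (boost d s p).2 = p.2 + ((boost d s p).2 0 - p.2 0) • e₁ := by
  ext i
  by_cases hi : i = 0 <;> simp [boost, hi]

lemma norm_boost_snd_sq_sub_sq (s : ℝ) (p : ℝ × EuclideanSpace ℝ (Fin d)) :
    ‖(boost d s p).2‖ ^ 2 - (boost d s p).2 0 ^ 2 = ‖p.2‖ ^ 2 - p.2 0 ^ 2 := by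
  have he : ‖e₁‖ = 1 := by simp
  have h := norm_add_smul_sq_sub_sq_inner he p.2 ((boost d s p).2 0 - p.2 0)
  rwa [← boost_snd_eq_add_smul_single, inner_single_zero_one, inner_single_zero_one] at h

lemma boost_mem_doubleCone_smul_single_iff {r s : ℝ} {p : ℝ × EuclideanSpace ℝ (Fin d)} :
    boost d s p ∈ doubleCone d r (r • e₁) ↔
      0 < min (exp (-s) * (p.2 0 - p.1)) (exp s * (p.2 0 + p.1)) ∧
        (p.2 0 - p.1) * (p.2 0 + p.1) + (‖p.2‖ ^ 2 - p.2 0 ^ 2) <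
          2 * r * min (exp (-s) * (p.2 0 - p.1)) (exp s * (p.2 0 + p.1)) := by
  have hprod : exp (-s) * (p.2 0 - p.1) * (exp s * (p.2 0 + p.1)) =
      (p.2 0 - p.1) * (p.2 0 + p.1) := by
    rw [mul_mul_mul_comm, ← exp_add, neg_add_cancel, exp_zero, one_mul]
  rw [mem_doubleCone_smul_single_iff, boost_snd_zero_sub_fst, boost_snd_zero_add_fst,
    norm_boost_snd_sq_sub_sq, hprod]

lemma boost_axis_mem_doubleCone_smul_single_iff {r s x : ℝ} (hx : 0 < x) :
    boost d s (0, x • e₁) ∈ doubleCone d r (r • e₁) ↔ x < 2 * r * exp (-|s|) := by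
  rw [boost_mem_doubleCone_smul_single_iff]
  simp [norm_smul, min_exp_neg_mul_exp_mul s x hx.le, hx, exp_pos, ← mul_assoc]

lemma boost_zero : boost d 0 = id := by
  funext p
  ext i
  · simp [boost]
  · by_cases hi : i = 0 <;> simp [boost, hi]

lemma le_mul_exp_neg_abs_of_boost_mapsTo {r R s : ℝ} (hr : 0 < r)
    (h : MapsTo (boost d s) (doubleCone d r (r • e₁)) (doubleCone d R (R • e₁))) :
    r ≤ R * exp (-|s|) := by
  have haxis : ∀ t, 0 < t → t < r → t < R * exp (-|s|) := by
    intro t ht htr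
    have hmem : (0, (2 * t) • e₁) ∈ doubleCone d r (r • e₁) := by
      have := (boost_axis_mem_doubleCone_smul_single_iff (d := d) (r := r) (s := 0) (x := 2 * t)
        (by positivity)).2 (by simpa using htr)
      rwa [boost_zero] at this
    have := (boost_axis_mem_doubleCone_smul_single_iff (by positivity)).1 (h hmem)
    linarith
  refine le_of_forall_lt_imp_le_of_dense fun t ht => (le_max_left t (r / 2)).trans ?_
  exact (haxis _ (lt_max_of_lt_right (half_pos hr)) (max_lt ht (half_lt_self hr))).le

lemma boost_mapsTo_of_le_mul_exp_neg_abs {r R s : ℝ} (h : r ≤ R * exp (-|s|)) :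
    MapsTo (boost d s) (doubleCone d r (r • e₁)) (doubleCone d R (R • e₁)) := by
  intro p hp
  have hR : 0 ≤ R :=
    (pos_of_mul_pos_left (((add_nonneg (abs_nonneg _) dist_nonneg).trans_lt hp).trans_le h)
      (exp_pos _).le).le
  obtain ⟨hpos, hlt⟩ := mem_doubleCone_smul_single_iff.1 hp
  have hmin := exp_neg_abs_mul_min_le s hpos.le
  refine boost_mem_doubleCone_smul_single_iff.2 ⟨(mul_pos (exp_pos _) hpos).trans_le hmin, ?_⟩
  calc _ < 2 * r * min (p.2 0 - p.1) (p.2 0 + p.1) := hlt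
    _ ≤ 2 * (R * exp (-|s|)) * min (p.2 0 - p.1) (p.2 0 + p.1) := by gcongr
    _ = 2 * R * (exp (-|s|) * min (p.2 0 - p.1) (p.2 0 + p.1)) := by ring
    _ ≤ 2 * R * min (exp (-s) * (p.2 0 - p.1)) (exp s * (p.2 0 + p.1)) := by gcongr

theorem boost_mapsTo_doubleCone_smul_single_iff {r R s : ℝ} (hr : 0 < r) :
    MapsTo (boost d s) (doubleCone d r (r • e₁)) (doubleCone d R (R • e₁)) ↔
      r ≤ R * exp (-|s|) :=
  ⟨le_mul_exp_neg_abs_of_boost_mapsTo hr, boost_mapsTo_of_le_mul_exp_neg_abs⟩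

end Boost

theorem boost_mapsTo_doubleCone_iff (d : ℕ) [NeZero d] (R ℓ : ℝ) (hℓ : 0 < ℓ)
    (hℓR : ℓ ≤ 2 * R) (s : ℝ) :
    Set.MapsTo (boost d s)
      (doubleCone d (ℓ / 2) ((ℓ / 2) • EuclideanSpace.single (0 : Fin d) (1 : ℝ)))
      (doubleCone d R (R • EuclideanSpace.single (0 : Fin d) (1 : ℝ)))
      ↔ |s| ≤ Real.log (2 * R / ℓ) := by
  rw [boost_mapsTo_doubleCone_smul_single_iff (half_pos hℓ),
    le_log_iff_exp_le (div_pos (hℓ.trans_le hℓR) hℓ), le_div_iff₀ hℓ, exp_neg,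
    ← div_eq_mul_inv, le_div_iff₀ (exp_pos _)]
  constructor <;> intro h <;> linarith
end

section
/- Let ρ : ℕ → ℝ be a sequence with ρ_n > 0 for all n and ∑_{n} ρ_n < ∞. Then for every z ∈ ℂ the family (sinc(ρ_n z))_{n} is multipliable, and the function P : ℂ → ℂ defined by P(z) = ∏'_{n} sinc(ρ_n z) is analytic (complex differentiable) on all of ℂ, with P(0) = 1; moreover the convergence of the partial products to P is uniform on every compact subset of ℂ. -/
open Filter

/-- `sinc z = sin z / z` for `z ≠ 0`, with `sinc 0 = 1`. -/
noncomputable def csinc (z : ℂ) : ℂ := if z = 0 then 1 else Complex.sin z / z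

/-!
Near `0`, `|sinc w - 1| ≤ |w|`, so on a compact set `K ⊆ closedBall 0 R` the factors satisfy
`|sinc (ρₙ z) - 1| ≤ R |ρₙ|` for all but finitely many `n`. The product therefore converges
uniformly on `K` by the Weierstrass test for products, and the limit is entire as a locally
uniform limit of entire functions.
-/

lemma csinc_eq_dslope : csinc = dslope Complex.sin 0 := by
  ext
  simp [dslope, Function.update_apply, csinc, slope, div_eq_inv_mul]

lemma differentiable_csinc : Differentiable ℂ csinc := by
  rw [csinc_eq_dslope, ← differentiableOn_univ, Complex.differentiableOn_dslope univ_mem]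
  exact Complex.differentiable_sin.differentiableOn

lemma norm_sin_sub_self_le {w : ℂ} (hw : ‖w‖ ≤ 1) : ‖Complex.sin w - w‖ ≤ ‖w‖ ^ 2 := by
  have h3 : ‖w‖ ^ 3 ≤ ‖w‖ ^ 2 := pow_le_pow_of_le_one (norm_nonneg w) hw (by norm_num)
  have h5 : ‖w‖ ^ 5 ≤ ‖w‖ ^ 2 := pow_le_pow_of_le_one (norm_nonneg w) hw (by norm_num)
  calc ‖Complex.sin w - w‖ = ‖(Complex.sin w - (w - w ^ 3 / 6)) - w ^ 3 / 6‖ := by ring_nf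
    _ ≤ ‖w‖ ^ 5 / 100 + ‖w‖ ^ 3 / 6 := by
      refine (norm_sub_le _ _).trans (add_le_add (Complex.sin_bound hw) ?_)
      simp [norm_pow]
    _ ≤ ‖w‖ ^ 2 := by linarith [sq_nonneg ‖w‖]

lemma norm_csinc_sub_one_le {w : ℂ} (hw : ‖w‖ ≤ 1) : ‖csinc w - 1‖ ≤ ‖w‖ := by
  rcases eq_or_ne w 0 with rfl | hw0
  · simp [csinc]
  have hnorm : 0 < ‖w‖ := norm_pos_iff.mpr hw0
  rw [csinc, if_neg hw0, div_sub_one hw0, norm_div, div_le_iff₀ hnorm, ← sq]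
  exact norm_sin_sub_self_le hw

section

variable {ι : Type*} {c : ι → ℂ}

lemma hasProdUniformlyOn_csinc_mul (hc : Summable fun i => ‖c i‖) {K : Set ℂ}
    (hK : IsCompact K) :
    HasProdUniformlyOn (fun i z => csinc (c i * z)) (fun z => ∏' i, csinc (c i * z)) K := by
  obtain ⟨R, hR, hKR⟩ := hK.isBounded.exists_pos_norm_le
  have hbound : ∀ᶠ i in cofinite, ∀ z ∈ K, ‖csinc (c i * z) - 1‖ ≤ ‖c i‖ * R := by
    filter_upwards [hc.tendsto_cofinite_zero.eventually_le_const (one_div_pos.mpr hR)] with i hi z hz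
    have hw : ‖c i * z‖ ≤ ‖c i‖ * R := by
      rw [norm_mul]
      exact mul_le_mul_of_nonneg_left (hKR z hz) (norm_nonneg _)
    have hw1 : ‖c i‖ * R ≤ 1 := (le_div_iff₀ hR).mp hi
    exact (norm_csinc_sub_one_le (hw.trans hw1)).trans hw
  have hcont : ∀ i, ContinuousOn (fun z => csinc (c i * z) - 1) K := fun i =>
    ((differentiable_csinc.continuous.comp (continuous_const.mul continuous_id)).sub
      continuous_const).continuousOn
  simpa using Summable.hasProdUniformlyOn_one_add hK (hc.mul_right R) hbound hcont

lemma differentiable_tprod_csinc_mul (hc : Summable fun i => ‖c i‖) :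
    Differentiable ℂ fun z => ∏' i, csinc (c i * z) := by
  have hloc : HasProdLocallyUniformlyOn (fun i z => csinc (c i * z))
      (fun z => ∏' i, csinc (c i * z)) Set.univ :=
    hasProdLocallyUniformlyOn_of_forall_compact isOpen_univ fun K _ hK =>
      hasProdUniformlyOn_csinc_mul hc hK
  have hpartial : ∀ s : Finset ι, DifferentiableOn ℂ (fun z => ∏ i ∈ s, csinc (c i * z))
      Set.univ := fun s =>
    (Differentiable.fun_finsetProd fun i _ =>
      differentiable_csinc.comp ((differentiable_const _).mul differentiable_id)).differentiableOn
  exact differentiableOn_univ.mp <|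
    hloc.differentiableOn (Eventually.of_forall hpartial) isOpen_univ

end

theorem analytic_tprod_sinc_general (ρ : ℕ → ℝ) (hsum : Summable ρ) :
    (∀ z : ℂ, Multipliable fun n : ℕ => csinc ((ρ n : ℂ) * z)) ∧
    Differentiable ℂ (fun z : ℂ => ∏' n : ℕ, csinc ((ρ n : ℂ) * z)) ∧
    (∏' n : ℕ, csinc ((ρ n : ℂ) * (0 : ℂ))) = 1 ∧
    ∀ K : Set ℂ, IsCompact K →
      TendstoUniformlyOn
        (fun (N : ℕ) (z : ℂ) => ∏ n ∈ Finset.range N, csinc ((ρ n : ℂ) * z))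
        (fun z : ℂ => ∏' n : ℕ, csinc ((ρ n : ℂ) * z)) atTop K := by
  have hc : Summable fun n => ‖(ρ n : ℂ)‖ := by simpa using hsum.abs
  have hunif := fun K (hK : IsCompact K) => hasProdUniformlyOn_csinc_mul hc hK
  refine ⟨fun z => ((hunif {z} isCompact_singleton).hasProd rfl).multipliable,
    differentiable_tprod_csinc_mul hc, by simp [csinc],
    fun K hK => (hunif K hK).tendstoUniformlyOn_finsetRange⟩

theorem analytic_tprod_sinc (ρ : ℕ → ℝ) (hpos : ∀ n, 0 < ρ n) (hsum : Summable ρ) :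
    (∀ z : ℂ, Multipliable fun n : ℕ => csinc ((ρ n : ℂ) * z)) ∧
    Differentiable ℂ (fun z : ℂ => ∏' n : ℕ, csinc ((ρ n : ℂ) * z)) ∧
    (∏' n : ℕ, csinc ((ρ n : ℂ) * (0 : ℂ))) = 1 ∧
    ∀ K : Set ℂ, IsCompact K →
      TendstoUniformlyOn
        (fun (N : ℕ) (z : ℂ) => ∏ n ∈ Finset.range N, csinc ((ρ n : ℂ) * z))
        (fun z : ℂ => ∏' n : ℕ, csinc ((ρ n : ℂ) * z)) atTop K :=
  analytic_tprod_sinc_general ρ hsum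
end

section
/- Let ρ : ℕ → ℝ be a sequence with ρ_n > 0 for all n and ∑_{n} ρ_n = s < ∞. Then there exists a probability measure μ on ℝ with μ([−s, s]) = 1 such that for every k ∈ ℝ: ∫_ℝ e^{ikt} dμ(t) = ∏'_{n} sinc(ρ_n k). (The infinite product of sinc functions is the characteristic function of an infinite convolution of uniform distributions, whose support grows by ρ_n at each step.) -/
/-!
Let `U₀, U₁, …` be independent and uniform on `[-1, 1]`, realised as the coordinates of the
infinite product measure. Since `sinc x` is the characteristic function of `U₀` at `x`, the
random series `∑ ρₙ Uₙ` — which converges absolutely, with `|∑ ρₙ Uₙ| ≤ s` — has characteristic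
function `∏ₙ sinc (ρₙ k)`: by independence this holds for the partial sums, and dominated
convergence passes to the limit. The bound `‖φ(x) - 1‖ ≤ |x|` for a characteristic function
`φ` of a law supported in `[-1, 1]` makes the infinite product converge.
-/

open MeasureTheory

open ProbabilityTheory Filter Topology Complex

lemma csinc_ofReal (x : ℝ) : csinc x = Real.sinc x := by
  rw [csinc, Real.sinc]
  split_ifs <;> simp_all [ofReal_sin]

instance isProbabilityMeasure_cond_Icc : IsProbabilityMeasure (volume[|Set.Icc (-1 : ℝ) 1]) :=
  cond_isProbabilityMeasure_of_finite (by simp) (by simp)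

lemma charFun_cond_Icc (x : ℝ) : charFun (volume[|Set.Icc (-1 : ℝ) 1]) x = csinc x := by
  rw [charFun_apply_real, ProbabilityTheory.cond, integral_smul_measure, Real.volume_Icc,
    integral_Icc_eq_integral_Ioc, ← intervalIntegral.integral_of_le (by norm_num), csinc_ofReal]
  rcases eq_or_ne x 0 with rfl | hx
  · norm_num
  · have := intervalIntegral.integral_comp_mul_left (a := -1) (b := 1) (fun t : ℝ => cexp (t * I)) hx
    simp only [ofReal_mul] at this
    rw [this, mul_neg, mul_one, integral_exp_mul_I_eq_sinc]
    have : (x : ℂ) ≠ 0 := ofReal_ne_zero.2 hx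
    norm_num
    field_simp

lemma norm_charFun_sub_one_le {μ : Measure ℝ} [IsProbabilityMeasure μ] {r : ℝ}
    (hμ : ∀ᵐ t ∂μ, |t| ≤ r) (k : ℝ) : ‖charFun μ k - 1‖ ≤ |k| * r := by
  have hint : Integrable (fun t : ℝ => cexp (k * t * I)) μ :=
    (integrable_const (1 : ℝ)).mono' (by fun_prop) (ae_of_all _ fun t => by
      norm_cast; rw [norm_exp_ofReal_mul_I])
  have hsub : charFun μ k - 1 = ∫ t, (cexp (I * ↑(k * t)) - 1) ∂μ := by
    rw [integral_sub (by simpa only [ofReal_mul, mul_comm I] using hint) (integrable_const 1)]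
    simp [charFun_apply_real, mul_comm I]
  rw [hsub, ← mul_one (|k| * r), ← probReal_univ (μ := μ)]
  refine norm_integral_le_of_norm_le_const (hμ.mono fun t ht => ?_)
  calc ‖cexp (I * ↑(k * t)) - 1‖ ≤ ‖k * t‖ := Real.norm_exp_I_mul_ofReal_sub_one_le
    _ ≤ |k| * r := by rw [Real.norm_eq_abs, abs_mul]; gcongr

lemma integral_prod_infinitePi {ι : Type*} {X : ι → Type*} [∀ i, MeasurableSpace (X i)]
    (μ : ∀ i, Measure (X i)) [∀ i, IsProbabilityMeasure (μ i)] {f : ∀ i, X i → ℂ}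
    (hf : ∀ i, Measurable (f i)) (s : Finset ι) :
    ∫ ω, ∏ i ∈ s, f i (ω i) ∂Measure.infinitePi μ = ∏ i ∈ s, ∫ x, f i x ∂μ i := by
  have hind := (iIndepFun_infinitePi (P := μ) hf).precomp (Subtype.val_injective (p := (· ∈ s)))
  simp_rw [← Finset.prod_coe_sort s]
  rw [hind.integral_fun_prod_eq_prod_integral
    fun i => ((hf i).comp (measurable_pi_apply _)).aestronglyMeasurable]
  congr 1 with i
  rw [← Measure.infinitePi_map_eval μ i,
    integral_map (measurable_pi_apply _).aemeasurable (hf i).aestronglyMeasurable]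

lemma integral_exp_sum_infinitePi {ι : Type*} (ν : ι → Measure ℝ) [∀ i, IsProbabilityMeasure (ν i)]
    (s : Finset ι) (k : ℝ) :
    ∫ ω, cexp (k * ↑(∑ i ∈ s, ω i) * I) ∂Measure.infinitePi ν = ∏ i ∈ s, charFun (ν i) k := by
  simp_rw [charFun_apply_real, ← integral_prod_infinitePi ν (f := fun _ t => cexp (k * t * I))
    (fun _ => by fun_prop), ← Complex.exp_sum, ofReal_sum, Finset.mul_sum, Finset.sum_mul]

/-- The law of `∑ₙ Xₙ` for independent `Xₙ ∼ νₙ`, meaningful when the series converges a.s. -/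
noncomputable def infiniteConvolution (ν : ℕ → Measure ℝ) [∀ n, IsProbabilityMeasure (ν n)] :
    Measure ℝ :=
  (Measure.infinitePi ν).map fun ω => ∑' n, ω n

section InfiniteConvolution

variable {ν : ℕ → Measure ℝ} [∀ n, IsProbabilityMeasure (ν n)] {ρ : ℕ → ℝ}

lemma ae_forall_abs_le_infinitePi (hν : ∀ n, ∀ᵐ t ∂ν n, |t| ≤ ρ n) :
    ∀ᵐ ω ∂Measure.infinitePi ν, ∀ n, |ω n| ≤ ρ n :=
  ae_all_iff.2 fun n => ae_of_ae_map (measurable_pi_apply n).aemeasurable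
    (by rw [Measure.infinitePi_map_eval ν n]; exact hν n)

lemma ae_hasSum_infinitePi (hν : ∀ n, ∀ᵐ t ∂ν n, |t| ≤ ρ n) (hρ : Summable ρ) :
    ∀ᵐ ω ∂Measure.infinitePi ν, HasSum ω (∑' n, ω n) :=
  (ae_forall_abs_le_infinitePi hν).mono fun _ hω => (hρ.of_norm_bounded hω).hasSum

lemma aemeasurable_tsum_infinitePi (hν : ∀ n, ∀ᵐ t ∂ν n, |t| ≤ ρ n) (hρ : Summable ρ) :
    AEMeasurable (fun ω : ℕ → ℝ => ∑' n, ω n) (Measure.infinitePi ν) :=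
  aemeasurable_of_tendsto_metrizable_ae' (fun N => by fun_prop)
    ((ae_hasSum_infinitePi hν hρ).mono fun _ hω => hω.tendsto_sum_nat)

lemma isProbabilityMeasure_infiniteConvolution (hν : ∀ n, ∀ᵐ t ∂ν n, |t| ≤ ρ n)
    (hρ : Summable ρ) : IsProbabilityMeasure (infiniteConvolution ν) :=
  Measure.isProbabilityMeasure_map (aemeasurable_tsum_infinitePi hν hρ)

lemma infiniteConvolution_Icc {s : ℝ} (hν : ∀ n, ∀ᵐ t ∂ν n, |t| ≤ ρ n) (hρ : HasSum ρ s) :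
    infiniteConvolution ν (Set.Icc (-s) s) = 1 := by
  have := isProbabilityMeasure_infiniteConvolution hν hρ.summable
  have hmem : ∀ᵐ x ∂infiniteConvolution ν, x ∈ Set.Icc (-s) s := by
    refine (ae_map_iff (aemeasurable_tsum_infinitePi hν hρ.summable) measurableSet_Icc).2 ?_
    filter_upwards [ae_forall_abs_le_infinitePi hν, ae_hasSum_infinitePi hν hρ.summable]
      with ω hle hsum
    exact abs_le.1 (hsum.norm_le_of_bounded hρ hle)
  rw [← prob_compl_eq_zero_iff measurableSet_Icc]
  exact ae_iff.1 hmem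

lemma multipliable_charFun (hν : ∀ n, ∀ᵐ t ∂ν n, |t| ≤ ρ n) (hρ : Summable ρ) (k : ℝ) :
    Multipliable fun n => charFun (ν n) k := by
  simpa using Complex.multipliable_one_add_of_summable (f := fun n => charFun (ν n) k - 1)
    ((hρ.mul_left |k|).of_norm_bounded fun n => norm_charFun_sub_one_le (hν n) k)

lemma charFun_infiniteConvolution (hν : ∀ n, ∀ᵐ t ∂ν n, |t| ≤ ρ n) (hρ : Summable ρ) (k : ℝ) :
    charFun (infiniteConvolution ν) k = ∏' n, charFun (ν n) k := by
  have hlim : Tendsto (fun N => ∏ n ∈ Finset.range N, charFun (ν n) k) atTop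
      (𝓝 (charFun (infiniteConvolution ν) k)) := by
    rw [infiniteConvolution, charFun_apply_real,
      integral_map (aemeasurable_tsum_infinitePi hν hρ) (by fun_prop)]
    simp_rw [← integral_exp_sum_infinitePi]
    refine tendsto_integral_of_dominated_convergence (fun _ => 1) (fun N => by fun_prop)
      (integrable_const 1) (fun N => ae_of_all _ fun ω => ?_) ?_
    · norm_cast; rw [norm_exp_ofReal_mul_I]
    · filter_upwards [ae_hasSum_infinitePi hν hρ] with ω hω
      exact ((by fun_prop : Continuous fun x : ℝ => cexp (k * x * I)).tendsto _).comp
        hω.tendsto_sum_nat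
  exact tendsto_nhds_unique hlim (multipliable_charFun hν hρ k).hasProd.tendsto_prod_nat

end InfiniteConvolution

theorem tprod_sinc_is_characteristic_function (ρ : ℕ → ℝ) (hpos : ∀ n, 0 < ρ n)
    (s : ℝ) (hsum : HasSum ρ s) :
    ∃ μ : Measure ℝ, IsProbabilityMeasure μ ∧ μ (Set.Icc (-s) s) = 1 ∧
      ∀ k : ℝ, (∫ t : ℝ, Complex.exp (Complex.I * (k : ℂ) * (t : ℂ)) ∂μ) =
        ∏' n : ℕ, csinc ((ρ n * k : ℝ) : ℂ) := by
  let ν n := (volume[|Set.Icc (-1 : ℝ) 1]).map (ρ n * ·)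
  have : ∀ n, IsProbabilityMeasure (ν n) := fun n => Measure.isProbabilityMeasure_map (by fun_prop)
  have hν : ∀ n, ∀ᵐ t ∂ν n, |t| ≤ ρ n := fun n =>
    (ae_map_iff (by fun_prop) (measurableSet_le (by fun_prop) measurable_const)).2 <|
      (ae_cond_mem measurableSet_Icc).mono fun t ht => by
        rw [abs_mul, abs_of_pos (hpos n)]
        exact mul_le_of_le_one_right (hpos n).le (abs_le.2 ht)
  refine ⟨infiniteConvolution ν, isProbabilityMeasure_infiniteConvolution hν hsum.summable,
    infiniteConvolution_Icc hν hsum, fun k => ?_⟩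
  have hexp : ∀ t : ℝ, cexp (I * k * t) = cexp (k * t * I) := fun t => by ring_nf
  simp_rw [hexp, ← charFun_apply_real, charFun_infiniteConvolution hν hsum.summable, ν,
    charFun_map_mul, charFun_cond_Icc]
end

section
/- Let z ∈ ℂ with 0 < |z| < 1 and 2·Re(z²) > |z|²/π² (equivalently, 2·cos(2·arg z) > π^{-2}). Then |sin z / z| < 1. -/
/-!
Up to order five, `sin z / z = 1 - z²/6 + z⁴/120 + R` with `‖R‖ ≤ ‖z‖⁶/4410` on the unit disc.
Writing `w = z²`, the hypothesis gives `Re w > ‖w‖/(2π²) > ‖w‖/20`, and then an explicit formula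
for `‖1 - w/6 + w²/120‖²` shows that the polynomial part has norm below `1 - ‖w‖³/4410`:
the linear gain `-Re w / 3` beats all higher-order terms.
-/

open Complex Finset

namespace Complex

theorem norm_sin_sub_le {x : ℂ} (hx : ‖x‖ ≤ 1) :
    ‖sin x - (x - x ^ 3 / 6 + x ^ 5 / 120)‖ ≤ ‖x‖ ^ 7 / 4410 :=
  calc
    ‖sin x - (x - x ^ 3 / 6 + x ^ 5 / 120)‖ =
        ‖(exp (-x * I) - ∑ m ∈ range 7, (-x * I) ^ m / m.factorial) * I / 2 -
         (exp (x * I) - ∑ m ∈ range 7, (x * I) ^ m / m.factorial) * I / 2‖ := by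
      simp [sin, field, Finset.sum_range_succ, Nat.factorial]
      grind [I_sq, two_ne_zero]
    _ ≤ ‖exp (-x * I) - ∑ m ∈ range 7, (-x * I) ^ m / m.factorial‖ / 2 +
        ‖exp (x * I) - ∑ m ∈ range 7, (x * I) ^ m / m.factorial‖ / 2 := by
      grw [norm_sub_le]
      simp
    _ ≤ ‖-x * I‖ ^ 7 * (Nat.succ 7 * (Nat.factorial 7 * (7 : ℕ) : ℝ)⁻¹) / 2 +
        ‖x * I‖ ^ 7 * (Nat.succ 7 * (Nat.factorial 7 * (7 : ℕ) : ℝ)⁻¹) / 2 := by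
      grw [exp_bound (by simpa) (by simp), exp_bound (by simpa) (by simp)]
    _ = ‖x‖ ^ 7 / 4410 := by norm_num [Nat.factorial, mul_one_div]

theorem norm_sin_div_sub_le {z : ℂ} (hz0 : z ≠ 0) (hz : ‖z‖ ≤ 1) :
    ‖sin z / z - (1 - z ^ 2 / 6 + z ^ 4 / 120)‖ ≤ ‖z‖ ^ 6 / 4410 := by
  have hsplit : sin z / z - (1 - z ^ 2 / 6 + z ^ 4 / 120) =
      (sin z - (z - z ^ 3 / 6 + z ^ 5 / 120)) / z := by
    field_simp
  rw [hsplit, norm_div, div_le_iff₀ (norm_pos_iff.mpr hz0)]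
  calc ‖sin z - (z - z ^ 3 / 6 + z ^ 5 / 120)‖ ≤ ‖z‖ ^ 7 / 4410 := norm_sin_sub_le hz
    _ = ‖z‖ ^ 6 / 4410 * ‖z‖ := by ring

theorem normSq_one_sub_div_six_add_sq_div_120 (w : ℂ) :
    normSq (1 - w / 6 + w ^ 2 / 120) =
      1 - w.re / 3 + w.re ^ 2 / 30 + normSq w / 90 - normSq w * w.re / 360
        + normSq w ^ 2 / 14400 := by
  simp only [pow_two, normSq_apply, add_re, sub_re, one_re, div_ofNat_re, mul_re, add_im, sub_im,
    one_im, div_ofNat_im, zero_sub, mul_im]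
  ring

theorem norm_one_sub_div_six_add_sq_div_120_lt {w : ℂ} (hw : ‖w‖ ≤ 1) (hre : ‖w‖ / 20 < w.re) :
    ‖1 - w / 6 + w ^ 2 / 120‖ < 1 - ‖w‖ ^ 3 / 4410 := by
  set m := ‖w‖
  have hm0 : 0 < m := by linarith [re_le_norm w]
  have hre1 : w.re ≤ 1 := (re_le_norm w).trans hw
  have hm2 : m ^ 2 ≤ m := pow_le_of_le_one hm0.le hw two_ne_zero
  have hm3 : m ^ 3 ≤ m := pow_le_of_le_one hm0.le hw three_ne_zero
  have hm4 : m ^ 4 ≤ m := pow_le_of_le_one hm0.le hw four_ne_zero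
  have hre0 : 0 < w.re := by linarith
  have hre2 : w.re ^ 2 ≤ w.re := pow_le_of_le_one hre0.le hre1 two_ne_zero
  have hsq : ‖1 - w / 6 + w ^ 2 / 120‖ ^ 2 < (1 - m ^ 3 / 4410) ^ 2 := by
    rw [← normSq_eq_norm_sq, normSq_one_sub_div_six_add_sq_div_120, normSq_eq_norm_sq]
    nlinarith [mul_nonneg (sq_nonneg m) hre0.le, pow_nonneg hm0.le 6]
  exact lt_of_pow_lt_pow_left₀ 2 (by linarith) hsq

end Complex

theorem abs_sinc_lt_one (z : ℂ) (h0 : 0 < ‖z‖) (h1 : ‖z‖ < 1)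
    (h2 : 2 * (z ^ 2).re > ‖z‖ ^ 2 / Real.pi ^ 2) :
    ‖Complex.sin z / z‖ < 1 := by
  have hpi : Real.pi ^ 2 < 10 := by nlinarith [Real.pi_lt_d2, Real.pi_pos]
  have hre : ‖z ^ 2‖ / 20 < (z ^ 2).re := by
    have : ‖z‖ ^ 2 / 10 < ‖z‖ ^ 2 / Real.pi ^ 2 := by gcongr
    rw [norm_pow]
    linarith
  have hpoly : ‖1 - z ^ 2 / 6 + z ^ 4 / 120‖ < 1 - ‖z‖ ^ 6 / 4410 := by
    have := norm_one_sub_div_six_add_sq_div_120_lt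
      (by rw [norm_pow]; exact pow_le_one₀ h0.le h1.le) hre
    rwa [← pow_mul, norm_pow, ← pow_mul] at this
  have hrem := norm_sin_div_sub_le (norm_pos_iff.mp h0) h1.le
  calc ‖Complex.sin z / z‖
      ≤ ‖1 - z ^ 2 / 6 + z ^ 4 / 120‖ + ‖Complex.sin z / z - (1 - z ^ 2 / 6 + z ^ 4 / 120)‖ :=
        norm_le_norm_add_norm_sub' _ _
    _ < 1 := by linarith
end

section
/- Let 0 < α ≤ 1 and let η : (−∞,0] → (0,∞) be continuous. Assume there are constants c > 0 and k₀ ≥ 0 such that η(−k) ≥ c·e^{k^α} for all k ≥ k₀. Then there exist constants C > 0 and τ₀ > 0 such that K_η(τ) ≤ C·τ^{1−α}·e^{−(πτ)^α} for all τ ≥ τ₀. (Second case of Lemma 6 of the paper.) -/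
open MeasureTheory

/-- `K_η(τ) = ∫_{πτ}^∞ [inf_{k ≥ 0} (1 + e^{u−k})·η(−k)]⁻¹ du`, valued in `[0,∞]`
(the integrand is `+∞` where the infimum vanishes). -/
noncomputable def Keta (η : ℝ → ℝ) (τ : ℝ) : ENNReal :=
  ∫⁻ u in Set.Ici (Real.pi * τ),
    (ENNReal.ofReal (⨅ k : {k : ℝ // 0 ≤ k}, (1 + Real.exp (u - k.1)) * η (-k.1)))⁻¹

/-!
For `u ≥ k₁ := max k₀ 1` every term of the infimum defining `K_η` is at least `c' e^{u^α}`: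
for `k ≥ k₁` because `e^{max (u - k) 0} e^{k^α} ≥ e^{u^α}` (the map `t ↦ t - t^α` is increasing
on `[1, ∞)`), and for `k ≤ k₁` because `η` has a positive minimum on `[-k₁, 0]`. Hence
`K_η(τ) ≤ c'⁻¹ ∫_{πτ}^∞ e^{-u^α} du`. Once `α s^α ≥ 2(1 - α)`, the integrand `e^{-u^α}` is at
most the derivative of `-(2/α) u^{1-α} e^{-u^α}` on `[s, ∞)`, so the tail from `s = πτ` is at most
`(2/α) s^{1-α} e^{-s^α}`.
-/

open Real Set Filter

theorem IsCompact.exists_pos_forall_le {X : Type*} [TopologicalSpace X] {s : Set X} {f : X → ℝ}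
    (hs : IsCompact s) (hf : ContinuousOn f s) (hpos : ∀ x ∈ s, 0 < f x) :
    ∃ m > 0, ∀ x ∈ s, m ≤ f x := by
  rcases s.eq_empty_or_nonempty with rfl | hne
  · exact ⟨1, one_pos, by simp⟩
  obtain ⟨x₀, hx₀, hmin⟩ := hs.exists_isMinOn hne hf
  exact ⟨f x₀, hpos x₀ hx₀, fun x hx => hmin hx⟩

theorem monotoneOn_sub_rpow {α : ℝ} (hα : α ≤ 1) :
    MonotoneOn (fun t : ℝ => t - t ^ α) (Ici 1) := by
  have hderiv : ∀ t ∈ Ioi (1 : ℝ), HasDerivAt (fun t : ℝ => t - t ^ α) (1 - α * t ^ (α - 1)) t :=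
    fun t ht => (hasDerivAt_id t).sub (hasDerivAt_rpow_const (Or.inl (by linarith [ht.out])))
  refine monotoneOn_of_hasDerivWithinAt_nonneg (convex_Ici 1) ?_
    (fun t ht => (hderiv t (by simpa using ht)).hasDerivWithinAt) fun t ht => ?_
  · exact continuousOn_id.sub
      (continuousOn_id.rpow_const fun t ht => Or.inl (show t ≠ 0 by linarith [ht.out]))
  · rw [interior_Ici] at ht
    have hle : t ^ (α - 1) ≤ 1 := rpow_le_one_of_one_le_of_nonpos ht.out.le (by linarith)
    have hnn : 0 ≤ t ^ (α - 1) := rpow_nonneg (by linarith [ht.out]) _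
    nlinarith

theorem rpow_le_max_sub_add_rpow {α k u : ℝ} (hα0 : 0 ≤ α) (hα1 : α ≤ 1) (hk : 1 ≤ k)
    (hu : 1 ≤ u) : u ^ α ≤ max (u - k) 0 + k ^ α := by
  rcases le_total k u with hku | huk
  · have := monotoneOn_sub_rpow hα1 hk hu hku
    simp only at this
    linarith [le_max_left (u - k) 0]
  · linarith [le_max_right (u - k) 0, rpow_le_rpow (by linarith) huk hα0]

theorem exp_max_le_one_add_exp (x : ℝ) : exp (max x 0) ≤ 1 + exp x := by
  rcases le_total x 0 with h | h
  · simp [max_eq_right h, (exp_pos x).le]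
  · simp [max_eq_left h]

theorem min_mul_exp_rpow_le_one_add_exp_mul {η : ℝ → ℝ} {α m c k₁ u k : ℝ} (hα0 : 0 ≤ α)
    (hα1 : α ≤ 1) (hm : 0 ≤ m) (hc : 0 ≤ c) (hk₁ : 1 ≤ k₁)
    (hη_small : ∀ k ∈ Icc 0 k₁, m ≤ η (-k)) (hη_large : ∀ k ≥ k₁, c * exp (k ^ α) ≤ η (-k))
    (hu : k₁ ≤ u) (hk : 0 ≤ k) :
    min (m * exp (-k₁)) c * exp (u ^ α) ≤ (1 + exp (u - k)) * η (-k) := by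
  have hu1 : 1 ≤ u := hk₁.trans hu
  suffices ∃ b, 0 ≤ b ∧ b ≤ η (-k) ∧
      min (m * exp (-k₁)) c * exp (u ^ α) ≤ exp (max (u - k) 0) * b by
    obtain ⟨b, hb, hbη, hlt⟩ := this
    exact hlt.trans (mul_le_mul (exp_max_le_one_add_exp _) hbη hb (by positivity))
  rcases le_total k k₁ with hkk₁ | hk₁k
  · refine ⟨m, hm, hη_small k ⟨hk, hkk₁⟩, ?_⟩
    have huα : u ^ α ≤ u := by simpa using rpow_le_rpow_of_exponent_le hu1 hα1
    calc min (m * exp (-k₁)) c * exp (u ^ α) ≤ m * exp (-k₁) * exp (u ^ α) := by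
          gcongr; exact min_le_left _ _
      _ = exp (u ^ α - k₁) * m := by rw [mul_assoc, ← exp_add]; ring_nf
      _ ≤ exp (max (u - k) 0) * m := by
          gcongr; linarith [le_max_left (u - k) 0]
  · refine ⟨c * exp (k ^ α), by positivity, hη_large k hk₁k, ?_⟩
    calc min (m * exp (-k₁)) c * exp (u ^ α) ≤ c * exp (u ^ α) := by
          gcongr; exact min_le_right _ _
      _ ≤ c * exp (max (u - k) 0 + k ^ α) := by
          gcongr; exact rpow_le_max_sub_add_rpow hα0 hα1 (hk₁.trans hk₁k) hu1
      _ = exp (max (u - k) 0) * (c * exp (k ^ α)) := by rw [exp_add]; ring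

theorem hasDerivAt_rpow_one_sub_mul_exp_neg_rpow {α u : ℝ} (hu : 0 < u) :
    HasDerivAt (fun u : ℝ => u ^ (1 - α) * exp (-u ^ α))
      (((1 - α) * u ^ (-α) - α) * exp (-u ^ α)) u := by
  have h1 : HasDerivAt (fun u : ℝ => u ^ (1 - α)) ((1 - α) * u ^ (-α)) u := by
    simpa using hasDerivAt_rpow_const (p := 1 - α) (Or.inl hu.ne')
  have h2 : HasDerivAt (fun u : ℝ => exp (-u ^ α)) (exp (-u ^ α) * -(α * u ^ (α - 1))) u :=
    (hasDerivAt_rpow_const (Or.inl hu.ne')).neg.exp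
  refine (h1.mul h2).congr_deriv ?_
  have : u ^ (1 - α) * u ^ (α - 1) = 1 := by rw [← rpow_add hu]; simp
  linear_combination (-(α * exp (-u ^ α))) * this

theorem tendsto_rpow_mul_exp_neg_rpow_atTop_nhds_zero (β : ℝ) {α : ℝ} (hα : 0 < α) :
    Tendsto (fun u : ℝ => u ^ β * exp (-u ^ α)) atTop (nhds 0) := by
  refine ((tendsto_rpow_mul_exp_neg_mul_atTop_nhds_zero (β / α) 1 one_pos).comp
    (tendsto_rpow_atTop hα)).congr' ?_
  filter_upwards [eventually_ge_atTop 0] with u hu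
  simp only [Function.comp_apply, ← rpow_mul hu, mul_div_cancel₀ β hα.ne', neg_one_mul]

theorem one_le_two_div_mul_sub_mul_rpow_neg {α s u : ℝ} (hα : 0 < α) (hs : 0 < s) (hsu : s ≤ u)
    (hsα : 2 * (1 - α) ≤ α * s ^ α) : 1 ≤ 2 / α * (α - (1 - α) * u ^ (-α)) := by
  have hu : 0 < u := hs.trans_le hsu
  have hinv : u ^ α * u ^ (-α) = 1 := by rw [← rpow_add hu]; simp
  have hcoef : 2 * (1 - α) * u ^ (-α) ≤ α :=
    calc 2 * (1 - α) * u ^ (-α) ≤ α * u ^ α * u ^ (-α) :=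
        mul_le_mul_of_nonneg_right (hsα.trans (by gcongr)) (rpow_pos_of_pos hu _).le
      _ = α := by rw [mul_assoc, hinv, mul_one]
  rw [show 2 / α * (α - (1 - α) * u ^ (-α)) = 2 - 2 * (1 - α) * u ^ (-α) / α by field_simp]
  linarith [(div_le_one hα).2 hcoef]

theorem lintegral_Ici_exp_neg_rpow_le {α s : ℝ} (hα : 0 < α) (hs : 0 < s)
    (hsα : 2 * (1 - α) ≤ α * s ^ α) :
    ∫⁻ u in Ici s, ENNReal.ofReal (exp (-u ^ α)) ≤
      ENNReal.ofReal (2 / α * s ^ (1 - α) * exp (-s ^ α)) := by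
  set G : ℝ → ℝ := fun u => -(2 / α) * (u ^ (1 - α) * exp (-u ^ α))
  set G' : ℝ → ℝ := fun u => 2 / α * (α - (1 - α) * u ^ (-α)) * exp (-u ^ α)
  have hG : ∀ u ∈ Ici s, HasDerivAt G (G' u) u := fun u hu =>
    ((hasDerivAt_rpow_one_sub_mul_exp_neg_rpow (hs.trans_le hu)).const_mul _).congr_deriv
      (by ring)
  have hG_lim : Tendsto G atTop (nhds 0) := by
    simpa only [G, mul_zero] using
      (tendsto_rpow_mul_exp_neg_rpow_atTop_nhds_zero (1 - α) hα).const_mul (-(2 / α))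
  have hle : ∀ u ∈ Ioi s, exp (-u ^ α) ≤ G' u := fun u hu =>
    le_mul_of_one_le_left (exp_pos _).le (one_le_two_div_mul_sub_mul_rpow_neg hα hs hu.out.le hsα)
  have hG'_nonneg : ∀ u ∈ Ioi s, 0 ≤ G' u := fun u hu => (exp_pos _).le.trans (hle u hu)
  have hG'_int : IntegrableOn G' (Ioi s) := integrableOn_Ioi_deriv_of_nonneg' hG hG'_nonneg hG_lim
  calc ∫⁻ u in Ici s, ENNReal.ofReal (exp (-u ^ α))
      ≤ ∫⁻ u in Ioi s, ENNReal.ofReal (G' u) := by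
        rw [← restrict_Ioi_eq_restrict_Ici]
        exact setLIntegral_mono' measurableSet_Ioi fun u hu => ENNReal.ofReal_le_ofReal (hle u hu)
    _ = ENNReal.ofReal (∫ u in Ioi s, G' u) :=
        (ofReal_integral_eq_lintegral_ofReal hG'_int
          ((ae_restrict_iff' measurableSet_Ioi).2 (ae_of_all _ hG'_nonneg))).symm
    _ = ENNReal.ofReal (2 / α * s ^ (1 - α) * exp (-s ^ α)) := by
        rw [integral_Ioi_of_hasDerivAt_of_nonneg' hG hG'_nonneg hG_lim]
        simp only [G]
        ring_nf

theorem Keta_le_of_mul_exp_rpow_le_iInf {η : ℝ → ℝ} {α b τ : ℝ} (hb : 0 < b)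
    (h : ∀ u ≥ π * τ, b * exp (u ^ α) ≤ ⨅ k : {k : ℝ // 0 ≤ k}, (1 + exp (u - k.1)) * η (-k.1)) :
    Keta η τ ≤ ENNReal.ofReal b⁻¹ * ∫⁻ u in Ici (π * τ), ENNReal.ofReal (exp (-u ^ α)) := by
  rw [← lintegral_const_mul' _ _ ENNReal.ofReal_ne_top]
  refine setLIntegral_mono' measurableSet_Ici fun u hu => ?_
  calc (ENNReal.ofReal (⨅ k : {k : ℝ // 0 ≤ k}, (1 + exp (u - k.1)) * η (-k.1)))⁻¹
      ≤ (ENNReal.ofReal (b * exp (u ^ α)))⁻¹ :=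
        ENNReal.inv_le_inv.2 (ENNReal.ofReal_le_ofReal (h u hu))
    _ = ENNReal.ofReal b⁻¹ * ENNReal.ofReal (exp (-u ^ α)) := by
        rw [← ENNReal.ofReal_inv_of_pos (by positivity), ← ENNReal.ofReal_mul (by positivity),
          mul_inv, exp_neg]

theorem Keta_upper_bound_exp_general (α : ℝ) (hα0 : 0 < α) (hα1 : α ≤ 1)
    (η : ℝ → ℝ) (hη_cont : ContinuousOn η (Set.Iic 0))
    (hη_pos : ∀ x ≤ (0 : ℝ), 0 < η x)
    (c : ℝ) (hc : 0 < c) (k₀ : ℝ)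
    (hη_gr : ∀ k ≥ k₀, c * Real.exp (k ^ α) ≤ η (-k)) :
    ∃ C > (0 : ℝ), ∃ τ₀ > (0 : ℝ), ∀ τ ≥ τ₀,
      Keta η τ ≤ ENNReal.ofReal (C * τ ^ (1 - α) * Real.exp (-(Real.pi * τ) ^ α)) := by
  set k₁ := max k₀ 1
  have hk₁ : 1 ≤ k₁ := le_max_right _ _
  obtain ⟨m, hm, hm_le⟩ := (isCompact_Icc (a := -k₁) (b := 0)).exists_pos_forall_le
    (hη_cont.mono fun x hx => hx.2) fun x hx => hη_pos x hx.2
  set c' := min (m * exp (-k₁)) c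
  have hc' : 0 < c' := lt_min (by positivity) hc
  have hπτ : Tendsto (fun τ => π * τ) atTop atTop := tendsto_id.const_mul_atTop pi_pos
  have hev : ∀ᶠ τ in atTop, 0 < τ ∧ k₁ ≤ π * τ ∧ 2 * (1 - α) ≤ α * (π * τ) ^ α :=
    (eventually_gt_atTop 0).and <| (hπτ.eventually_ge_atTop k₁).and <|
      (((tendsto_rpow_atTop hα0).comp hπτ).const_mul_atTop hα0).eventually_ge_atTop _
  obtain ⟨τ₀, hτ₀⟩ := eventually_atTop.1 hev
  refine ⟨c'⁻¹ * (2 / α) * π ^ (1 - α), by positivity, τ₀, (hτ₀ τ₀ le_rfl).1, fun τ hτ => ?_⟩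
  obtain ⟨hτ0, hk₁τ, hατ⟩ := hτ₀ τ hτ
  have hinf (u : ℝ) (hu : u ≥ π * τ) :
      c' * exp (u ^ α) ≤ ⨅ k : {k : ℝ // 0 ≤ k}, (1 + exp (u - k.1)) * η (-k.1) :=
    le_ciInf fun k => min_mul_exp_rpow_le_one_add_exp_mul hα0.le hα1 hm.le hc.le hk₁
      (fun k hk => hm_le (-k) ⟨by linarith [hk.2], by linarith [hk.1]⟩)
      (fun k hk => hη_gr k ((le_max_left _ _).trans hk)) (hk₁τ.trans hu) k.2
  calc Keta η τ ≤ ENNReal.ofReal c'⁻¹ * ∫⁻ u in Ici (π * τ), ENNReal.ofReal (exp (-u ^ α)) :=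
        Keta_le_of_mul_exp_rpow_le_iInf hc' hinf
    _ ≤ ENNReal.ofReal c'⁻¹ * ENNReal.ofReal (2 / α * (π * τ) ^ (1 - α) * exp (-(π * τ) ^ α)) := by
        gcongr
        exact lintegral_Ici_exp_neg_rpow_le hα0 (by positivity) hατ
    _ = ENNReal.ofReal (c'⁻¹ * (2 / α) * π ^ (1 - α) * τ ^ (1 - α) * exp (-(π * τ) ^ α)) := by
        rw [← ENNReal.ofReal_mul (by positivity), mul_rpow pi_pos.le hτ0.le]
        ring_nf

theorem Keta_upper_bound_exp (α : ℝ) (hα0 : 0 < α) (hα1 : α ≤ 1)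
    (η : ℝ → ℝ) (hη_cont : ContinuousOn η (Set.Iic 0))
    (hη_pos : ∀ x ≤ (0 : ℝ), 0 < η x)
    (c : ℝ) (hc : 0 < c) (k₀ : ℝ) (hk₀ : 0 ≤ k₀)
    (hη_gr : ∀ k ≥ k₀, c * Real.exp (k ^ α) ≤ η (-k)) :
    ∃ C > (0 : ℝ), ∃ τ₀ > (0 : ℝ), ∀ τ ≥ τ₀,
      Keta η τ ≤ ENNReal.ofReal (C * τ ^ (1 - α) * Real.exp (-(Real.pi * τ) ^ α)) :=
  Keta_upper_bound_exp_general α hα0 hα1 η hη_cont hη_pos c hc k₀ hη_gr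
end

section
/- Let n > 1 be real and let η : (−∞,0] → (0,∞) be continuous. Assume there are constants c > 0 and k₀ ≥ 1 such that η(−k) ≥ c·k^n for all k ≥ k₀. Then there exist constants C > 0 and τ₀ > 0 such that K_η(τ) ≤ C·τ^{1−n} for all τ ≥ τ₀. (First case of Lemma 6 of the paper.) -/
open MeasureTheory

/-!
For `k ≥ 0` we have `η(-k) ≥ A (1 + k)ⁿ` for some `A > 0` (continuity on `[0, k₀]`, growth beyond).
Hence, once `(u/2)ⁿ ≤ e^{u/2}`, every term of the infimum is at least `A (u/2)ⁿ`: for `k ≥ u/2`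
the factor `η(-k)` is that large, for `k < u/2` the factor `e^{u-k}` is. So the integrand of `K_η`
is `O(u⁻ⁿ)` on `[πτ, ∞)`, and `∫_{πτ}^∞ u⁻ⁿ du = (πτ)^{1-n}/(n-1)`.
-/

open Real Set Filter

lemma eventually_rpow_le_exp (s : ℝ) : ∀ᶠ x in atTop, x ^ s ≤ exp x := by
  filter_upwards [(tendsto_exp_div_rpow_atTop s).eventually_ge_atTop 1, eventually_gt_atTop 0]
    with x hx hx0
  rwa [le_div_iff₀ (rpow_pos_of_pos hx0 s), one_mul] at hx

lemma exists_pos_mul_one_add_rpow_le {f : ℝ → ℝ} {n c k₀ : ℝ} (hn : 0 ≤ n)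
    (hf : ContinuousOn f (Icc 0 k₀)) (hf_pos : ∀ k ∈ Icc 0 k₀, 0 < f k) (hc : 0 < c)
    (hk₀ : 1 ≤ k₀) (hf_ge : ∀ k ≥ k₀, c * k ^ n ≤ f k) :
    ∃ A > 0, ∀ k ≥ 0, A * (1 + k) ^ n ≤ f k := by
  obtain ⟨k₁, hk₁, hmin⟩ :=
    isCompact_Icc.exists_isMinOn (nonempty_Icc.2 (by linarith)) hf
  have hm := hf_pos k₁ hk₁
  refine ⟨min (f k₁ / (1 + k₀) ^ n) (c / 2 ^ n), by positivity, fun k hk => ?_⟩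
  rcases le_total k k₀ with hkk₀ | hkk₀
  · calc min (f k₁ / (1 + k₀) ^ n) (c / 2 ^ n) * (1 + k) ^ n
          ≤ f k₁ / (1 + k₀) ^ n * (1 + k₀) ^ n := by
            gcongr
            exact min_le_left _ _
      _ = f k₁ := div_mul_cancel₀ _ (by positivity)
      _ ≤ f k := hmin ⟨hk, hkk₀⟩
  · calc min (f k₁ / (1 + k₀) ^ n) (c / 2 ^ n) * (1 + k) ^ n
          ≤ c / 2 ^ n * (2 * k) ^ n := by
            gcongr
            · exact min_le_right _ _
            · linarith
      _ = c * k ^ n := by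
            rw [mul_rpow zero_le_two (by linarith)]
            field_simp
      _ ≤ f k := hf_ge k hkk₀

lemma mul_half_rpow_le_one_add_exp_mul {A n u k y : ℝ} (hA : 0 ≤ A) (hn : 0 ≤ n) (hk : 0 ≤ k)
    (hu : 0 ≤ u) (hexp : (u / 2) ^ n ≤ exp (u / 2)) (hy : A * (1 + k) ^ n ≤ y) :
    A * (u / 2) ^ n ≤ (1 + exp (u - k)) * y := by
  have hAy : A ≤ y := (le_mul_of_one_le_right hA (one_le_rpow (by linarith) hn)).trans hy
  rcases le_or_gt (u / 2) k with hku | hku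
  · calc A * (u / 2) ^ n ≤ A * (1 + k) ^ n := by gcongr; linarith
      _ ≤ y := hy
      _ ≤ (1 + exp (u - k)) * y := by
          nlinarith [exp_pos (u - k)]
  · calc A * (u / 2) ^ n ≤ A * exp (u - k) := by
          gcongr
          exact hexp.trans (exp_le_exp.2 (by linarith))
      _ ≤ y * exp (u - k) := by gcongr
      _ ≤ (1 + exp (u - k)) * y := by linarith

lemma lintegral_Ici_ofReal_rpow_neg {a n : ℝ} (ha : 0 < a) (hn : 1 < n) :
    ∫⁻ u in Ici a, ENNReal.ofReal (u ^ (-n)) = ENNReal.ofReal (a ^ (1 - n) / (n - 1)) := by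
  have hint : IntegrableOn (fun u : ℝ => u ^ (-n)) (Ioi a) :=
    integrableOn_Ioi_rpow_of_lt (by linarith) ha
  have hnonneg : 0 ≤ᵐ[volume.restrict (Ioi a)] fun u : ℝ => u ^ (-n) :=
    (ae_restrict_iff' measurableSet_Ioi).2
      (Eventually.of_forall fun u hu => rpow_nonneg (ha.trans hu).le _)
  rw [← setLIntegral_congr Ioi_ae_eq_Ici, ← ofReal_integral_eq_lintegral_ofReal hint hnonneg,
    integral_Ioi_rpow_of_lt (by linarith) ha, show -n + 1 = 1 - n by ring,
    neg_div, ← div_neg, neg_sub]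

lemma inv_ofReal_iInf_le {ι : Type*} [Nonempty ι] {g : ι → ℝ} {b : ℝ} (hb : 0 < b)
    (hg : ∀ i, b ≤ g i) : (ENNReal.ofReal (⨅ i, g i))⁻¹ ≤ ENNReal.ofReal b⁻¹ := by
  rw [ENNReal.ofReal_inv_of_pos hb]
  exact ENNReal.inv_le_inv' (ENNReal.ofReal_le_ofReal (le_ciInf hg))

lemma Keta_le_of_forall_le {η : ℝ → ℝ} {τ A n : ℝ} (hn : 1 < n) (hτ : 0 < π * τ) (hA : 0 < A)
    (h : ∀ u ≥ π * τ, ∀ k ≥ 0, A * u ^ n ≤ (1 + exp (u - k)) * η (-k)) :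
    Keta η τ ≤ ENNReal.ofReal (A⁻¹ * ((π * τ) ^ (1 - n) / (n - 1))) := by
  have : Nonempty {k : ℝ // 0 ≤ k} := ⟨⟨0, le_rfl⟩⟩
  calc Keta η τ ≤ ∫⁻ u in Ici (π * τ), ENNReal.ofReal A⁻¹ * ENNReal.ofReal (u ^ (-n)) := by
        refine setLIntegral_mono (by fun_prop) fun u hu => ?_
        have hu_pos : 0 < u := hτ.trans_le hu
        rw [← ENNReal.ofReal_mul (inv_nonneg.2 hA.le), rpow_neg hu_pos.le, ← mul_inv]
        exact inv_ofReal_iInf_le (by positivity) fun k => h u hu k.1 k.2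
    _ = ENNReal.ofReal (A⁻¹ * ((π * τ) ^ (1 - n) / (n - 1))) := by
        rw [lintegral_const_mul' _ _ ENNReal.ofReal_ne_top, lintegral_Ici_ofReal_rpow_neg hτ hn,
          ENNReal.ofReal_mul (inv_nonneg.2 hA.le)]

theorem Keta_upper_bound_poly (n : ℝ) (hn : 1 < n)
    (η : ℝ → ℝ) (hη_cont : ContinuousOn η (Set.Iic 0))
    (hη_pos : ∀ x ≤ (0 : ℝ), 0 < η x)
    (c : ℝ) (hc : 0 < c) (k₀ : ℝ) (hk₀ : 1 ≤ k₀)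
    (hη_gr : ∀ k ≥ k₀, c * k ^ n ≤ η (-k)) :
    ∃ C > (0 : ℝ), ∃ τ₀ > (0 : ℝ), ∀ τ ≥ τ₀,
      Keta η τ ≤ ENNReal.ofReal (C * τ ^ (1 - n)) := by
  obtain ⟨A, hA, hA_le⟩ := exists_pos_mul_one_add_rpow_le (f := fun k => η (-k)) (by linarith)
    (hη_cont.comp continuousOn_neg fun k hk => neg_nonpos.2 hk.1)
    (fun k hk => hη_pos _ (neg_nonpos.2 hk.1)) hc hk₀ hη_gr
  obtain ⟨u₁, hu₁⟩ := eventually_atTop.1 <|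
    ((tendsto_id.atTop_div_const two_pos).eventually (eventually_rpow_le_exp n)).and
      (eventually_ge_atTop 0)
  refine ⟨(A / 2 ^ n)⁻¹ * π ^ (1 - n) / (n - 1), div_pos (by positivity) (sub_pos.2 hn),
    max u₁ 1 / π, by positivity, fun τ hτ => ?_⟩
  have hπτ : max u₁ 1 ≤ π * τ := by rwa [ge_iff_le, div_le_iff₀' pi_pos] at hτ
  have hτ_pos : 0 < τ := pos_of_mul_pos_right (by linarith [le_max_right u₁ 1]) pi_pos.le
  calc Keta η τ ≤ ENNReal.ofReal ((A / 2 ^ n)⁻¹ * ((π * τ) ^ (1 - n) / (n - 1))) := by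
        refine Keta_le_of_forall_le hn (by positivity) (by positivity) fun u hu k hk => ?_
        obtain ⟨hexp, hu₀⟩ := hu₁ u ((le_max_left _ _).trans (hπτ.trans hu))
        rw [div_mul_eq_mul_div, mul_div_assoc, ← div_rpow hu₀ zero_le_two]
        exact mul_half_rpow_le_one_add_exp_mul hA.le (by linarith) hk hu₀ hexp (hA_le k hk)
    _ = ENNReal.ofReal ((A / 2 ^ n)⁻¹ * π ^ (1 - n) / (n - 1) * τ ^ (1 - n)) := by
        rw [mul_rpow pi_pos.le hτ_pos.le]
        ring_nf
end

section
/- Let n > 1 be real and let η : (−∞,0] → (0,∞) be continuous. Assume there are constants c > 0 and k₀ ≥ 1 such that η(−k) ≥ c·k^n for all k ≥ k₀. Then there exist constants c' > 0 and u₀ > 0 such that inf_{k ≥ 0} (1 + e^{u−k})·η(−k) ≥ c'·u^n for all u ≥ u₀. (Polynomial analogue of the key intermediate estimate in the proof of Lemma 6.) -/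
open Filter Real Set

/-!
Split the infimum at `k = u / 2`. For `k ≤ u / 2` the factor `exp (u - k) ≥ exp (u / 2)` beats any
power of `u`, because `η` is bounded below on `(-∞, 0]` by a positive constant (continuity and
positivity on `[-k₀, 0]`, growth beyond). For `k ≥ u / 2` the growth hypothesis alone gives
`η (-k) ≥ c k ^ n ≥ (c / 2 ^ n) u ^ n`.
-/

theorem exists_pos_le_of_continuousOn_Ici {f : ℝ → ℝ} {a K δ₀ : ℝ}
    (hf : ContinuousOn f (Ici a)) (hpos : ∀ x ≥ a, 0 < f x) (hδ₀ : 0 < δ₀)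
    (htail : ∀ x ≥ K, δ₀ ≤ f x) : ∃ δ > 0, ∀ x ≥ a, δ ≤ f x := by
  obtain ⟨x₀, hx₀, hmin⟩ := isCompact_Icc.exists_isMinOn
    (nonempty_Icc.2 (le_max_left a K)) (hf.mono Icc_subset_Ici_self)
  refine ⟨min (f x₀) δ₀, lt_min (hpos x₀ hx₀.1) hδ₀, fun x hx => ?_⟩
  rcases le_total x (max a K) with h | h
  · exact (min_le_left _ _).trans (hmin ⟨hx, h⟩)
  · exact (min_le_right _ _).trans (htail x (le_of_max_le_right h))

theorem eventually_mul_rpow_le_mul_exp (n a : ℝ) {b s : ℝ} (hb : 0 < b) (hs : 0 < s) :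
    ∀ᶠ x in atTop, a * x ^ n ≤ b * exp (s * x) := by
  filter_upwards [(tendsto_exp_mul_div_rpow_atTop n s hs).eventually_ge_atTop (a / b),
    eventually_gt_atTop 0] with x hx hx0
  rw [div_le_div_iff₀ hb (rpow_pos_of_pos hx0 n)] at hx
  linarith

theorem min_le_one_add_exp_mul {f : ℝ → ℝ} {n c δ K u : ℝ} (hn : 0 ≤ n) (hc : 0 ≤ c)
    (hδ : 0 ≤ δ) (hδf : ∀ k ≥ 0, δ ≤ f k) (hgr : ∀ k ≥ K, c * k ^ n ≤ f k)
    (hu : 0 ≤ u) (huK : 2 * K ≤ u) {k : ℝ} (hk : 0 ≤ k) :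
    min (δ * exp (u / 2)) (c * (u / 2) ^ n) ≤ (1 + exp (u - k)) * f k := by
  have hfk : 0 ≤ f k := hδ.trans (hδf k hk)
  have hexp_le : exp (u - k) * f k ≤ (1 + exp (u - k)) * f k := by nlinarith
  rcases le_total k (u / 2) with hku | hku
  · calc min (δ * exp (u / 2)) (c * (u / 2) ^ n) ≤ δ * exp (u / 2) := min_le_left _ _
      _ ≤ f k * exp (u - k) :=
          mul_le_mul (hδf k hk) (exp_le_exp.2 (by linarith)) (exp_pos _).le hfk
      _ ≤ (1 + exp (u - k)) * f k := by rw [mul_comm]; exact hexp_le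
  · calc min (δ * exp (u / 2)) (c * (u / 2) ^ n) ≤ c * (u / 2) ^ n := min_le_right _ _
      _ ≤ c * k ^ n := mul_le_mul_of_nonneg_left (rpow_le_rpow (by linarith) hku hn) hc
      _ ≤ f k := hgr k (by linarith)
      _ ≤ (1 + exp (u - k)) * f k := le_mul_of_one_le_left hfk (by linarith [exp_pos (u - k)])

theorem inf_lower_bound_poly (n : ℝ) (hn : 1 < n)
    (η : ℝ → ℝ) (hη_cont : ContinuousOn η (Set.Iic 0))
    (hη_pos : ∀ x ≤ (0 : ℝ), 0 < η x)
    (c : ℝ) (hc : 0 < c) (k₀ : ℝ) (hk₀ : 1 ≤ k₀)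
    (hη_gr : ∀ k ≥ k₀, c * k ^ n ≤ η (-k)) :
    ∃ c' > (0 : ℝ), ∃ u₀ > (0 : ℝ), ∀ u ≥ u₀,
      c' * u ^ n ≤
        ⨅ k : {k : ℝ // 0 ≤ k}, (1 + Real.exp (u - k.1)) * η (-k.1) := by
  obtain ⟨δ, hδ, hδη⟩ := exists_pos_le_of_continuousOn_Ici (f := fun k => η (-k)) (a := 0)
    (hη_cont.comp continuousOn_neg fun _ hk => neg_nonpos.2 (mem_Ici.1 hk))
    (fun k hk => hη_pos _ (neg_nonpos.2 hk)) hc fun k hk =>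
      (le_mul_of_one_le_right hc.le (one_le_rpow (hk₀.trans hk) (by linarith))).trans (hη_gr k hk)
  obtain ⟨u₁, hu₁⟩ := eventually_atTop.1
    (eventually_mul_rpow_le_mul_exp n (c / 2 ^ n) hδ (by norm_num : (0 : ℝ) < 1 / 2))
  refine ⟨c / 2 ^ n, by positivity, max u₁ (2 * k₀), by positivity, fun u hu => ?_⟩
  have hu₀ : 0 ≤ u := by linarith [le_of_max_le_right hu]
  have hpow : c / 2 ^ n * u ^ n = c * (u / 2) ^ n := by
    rw [div_rpow hu₀ zero_le_two]; ring
  have hsmall : c / 2 ^ n * u ^ n ≤ δ * exp (u / 2) := by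
    simpa only [one_div_mul_eq_div] using hu₁ u (le_of_max_le_left hu)
  refine le_ciInf fun ⟨k, hk⟩ => ?_
  calc c / 2 ^ n * u ^ n = min (δ * exp (u / 2)) (c * (u / 2) ^ n) := by
        rw [← hpow, min_eq_right hsmall]
    _ ≤ _ := min_le_one_add_exp_mul (by linarith) hc.le hδ.le hδη hη_gr hu₀
        (le_of_max_le_right hu) hk
end

section
/- Let c₁ ≥ 0 and T > c₁, let k ∈ ℝ, and let G : ℂ → ℂ be continuous on the closed upper half-plane {z : Im z ≥ 0} and analytic on the open upper half-plane {z : Im z > 0}. Assume there is an integrable function φ : ℝ → [0,∞) with φ(x) → 0 as |x| → ∞ such that |G(z)| ≤ φ(Re z)·e^{c₁·Im z} for all z with Im z ≥ 0. Then the function p ↦ G(p)·e^{ipT}·(1 + e^{k−p})^{−1} is integrable on ℝ, the series ∑_{n=0}^∞ G(k + 2πi(n + 1/2))·e^{−2π(n+1/2)T} converges absolutely, and ∫_ℝ G(p)·e^{ipT}·(1 + e^{k−p})^{−1} dp = 2πi·e^{ikT}·∑_{n=0}^∞ G(k + 2πi(n + 1/2))·e^{−2π(n+1/2)T}. (Contour-closing/residue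 computation used in the proof of Lemma 1: the poles of (1 + e^{k−p})^{−1} in the upper half-plane lie at p = k + 2πi(n + 1/2), n = 0, 1, 2, …, each with residue 1.) -/
/-
The poles of `(1 + e^{k-p})⁻¹` in the closed upper half-plane are the simple poles
`pₙ = k + 2πi(n + 1/2)` with residue 1, one in each strip `2πn ≤ Im p ≤ 2π(n+1)`. Integrating
over the rectangle `[-R, R] × [2πn, 2π(n+1)]` and letting `R → ∞` (the vertical sides vanish
since `φ → 0` and `|1 + e^{k-p}| ≥ 1/2` once `|Re p - k| ≥ 1`) gives
`Iₙ - Iₙ₊₁ = 2πi G(pₙ) e^{i pₙ T}` for the integral `Iₙ` along `Im p = 2πn`. On that line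
`e^{k-p} > 0`, so `|Iₙ| ≤ ‖φ‖₁ e^{2πn(c₁-T)} → 0`, and the series of residues telescopes to `I₀`.
-/

open MeasureTheory Filter

open Complex Set Topology
open scoped Real

lemma log_sub_log_neg_of_im_pos {u : ℂ} (hu : 0 < u.im) : log u - log (-u) = π * I := by
  apply Complex.ext <;> simp [log_re, log_im, arg_neg_eq_arg_sub_pi_of_im_pos hu]

lemma integral_horizontal_eq_sub_of_hasDerivAt {F f : ℂ → ℂ} {a b y : ℝ}
    (hF : ∀ x ∈ uIcc a b, HasDerivAt F (f (x + y * I)) (x + y * I))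
    (hf : ContinuousOn (fun x : ℝ => f (x + y * I)) (uIcc a b)) :
    ∫ x in a..b, f (x + y * I) = F (b + y * I) - F (a + y * I) :=
  intervalIntegral.integral_eq_sub_of_hasDerivAt
    (fun x hx => ((hF x hx).comp_add_const (x : ℂ) (y * I)).comp_ofReal) hf.intervalIntegrable

lemma integral_vertical_eq_sub_of_hasDerivAt {F f : ℂ → ℂ} {x c e : ℝ}
    (hF : ∀ y ∈ uIcc c e, HasDerivAt F (f (x + y * I)) (x + y * I))
    (hf : ContinuousOn (fun y : ℝ => f (x + y * I)) (uIcc c e)) :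
    I • ∫ y in c..e, f (x + y * I) = F (x + e * I) - F (x + c * I) := by
  rw [smul_eq_mul, ← intervalIntegral.integral_const_mul]
  have hIf : ContinuousOn (fun y : ℝ => I * f (x + y * I)) (uIcc c e) :=
    continuousOn_const.mul hf
  refine intervalIntegral.integral_eq_sub_of_hasDerivAt (f := fun y : ℝ => F (x + y * I))
    (fun y hy => ?_) hIf.intervalIntegrable
  have hline : HasDerivAt (fun y : ℝ => (x + y * I : ℂ)) I y := by
    simpa using (((hasDerivAt_id (y : ℂ)).mul_const I).const_add (x : ℂ)).comp_ofReal
  rw [mul_comm]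
  exact (hF y hy).comp y hline

lemma hasDerivAt_log_sub {p z₀ : ℂ} (h : p - z₀ ∈ slitPlane) :
    HasDerivAt (fun q => log (q - z₀)) (p - z₀)⁻¹ p := by
  simpa using ((hasDerivAt_id p).sub_const z₀).clog h

lemma hasDerivAt_log_const_sub {p z₀ : ℂ} (h : z₀ - p ∈ slitPlane) :
    HasDerivAt (fun q => log (z₀ - q)) (p - z₀)⁻¹ p := by
  have := ((hasDerivAt_id p).const_sub z₀).clog h
  rwa [neg_div, ← div_neg, neg_sub, one_div] at this

lemma eq_zero_of_exp_eq_one {x : ℂ} (h : exp x = 1) (him : |x.im| < 2 * π) : x = 0 := by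
  obtain ⟨n, rfl⟩ := exp_eq_one_iff.mp h
  have hn : |(n : ℝ)| < 1 := by
    have : ((n : ℂ) * (2 * π * I)).im = n * (2 * π) := by simp
    rw [this, abs_mul, abs_of_pos Real.two_pi_pos] at him
    nlinarith [Real.two_pi_pos]
  have : n = 0 := by
    rw [← Int.cast_abs, ← Int.cast_one, Int.cast_lt, Int.abs_lt_one_iff] at hn
    exact hn
  simp [this]

lemma hasSum_of_sub_succ {E : Type*} [AddCommGroup E] [TopologicalSpace E] [IsTopologicalAddGroup E]
    [T2Space E] {a b : ℕ → E} (hb : Summable b) (hab : ∀ n, a n - a (n + 1) = b n)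
    (ha : Tendsto a atTop (𝓝 0)) : HasSum b (a 0) := by
  rw [hb.hasSum_iff_tendsto_nat]
  simp_rw [← hab, Finset.sum_range_sub']
  simpa using tendsto_const_nhds.sub ha

/-- The boundary integral in the form used by
`Complex.integral_boundary_rect_eq_zero_of_differentiable_on_off_countable`. -/
noncomputable def rectBoundaryIntegral (f : ℂ → ℂ) (z w : ℂ) : ℂ :=
  (∫ x : ℝ in z.re..w.re, f (x + z.im * I)) - (∫ x : ℝ in z.re..w.re, f (x + w.im * I)) +
    I • (∫ y : ℝ in z.im..w.im, f (w.re + y * I)) - I • ∫ y : ℝ in z.im..w.im, f (z.re + y * I)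

def rectBoundary (z w : ℂ) : Set ℂ :=
  uIcc z.re w.re ×ℂ {z.im, w.im} ∪ {z.re, w.re} ×ℂ uIcc z.im w.im

section RectBoundary

variable {f g : ℂ → ℂ} {z w z₀ : ℂ}

lemma mapsTo_horizontal_rectBoundary {y : ℝ} (hy : y = z.im ∨ y = w.im) :
    MapsTo (fun x : ℝ => (x + y * I : ℂ)) (uIcc z.re w.re) (rectBoundary z w) := fun x hx => by
  left; simpa [mem_reProdIm, hx] using hy

lemma mapsTo_vertical_rectBoundary {x : ℝ} (hx : x = z.re ∨ x = w.re) :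
    MapsTo (fun y : ℝ => (x + y * I : ℂ)) (uIcc z.im w.im) (rectBoundary z w) := fun y hy => by
  right; simpa [mem_reProdIm, hy] using hx

lemma rectBoundaryIntegral_congr (h : EqOn f g (rectBoundary z w)) :
    rectBoundaryIntegral f z w = rectBoundaryIntegral g z w := by
  have side : ∀ {a b : ℝ} (γ : ℝ → ℂ), MapsTo γ (uIcc a b) (rectBoundary z w) →
      ∫ t in a..b, f (γ t) = ∫ t in a..b, g (γ t) := fun γ hγ =>
    intervalIntegral.integral_congr fun t ht => h (hγ ht)
  simp only [rectBoundaryIntegral]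
  rw [side _ (mapsTo_horizontal_rectBoundary (.inl rfl)),
    side _ (mapsTo_horizontal_rectBoundary (.inr rfl)),
    side _ (mapsTo_vertical_rectBoundary (.inr rfl)),
    side _ (mapsTo_vertical_rectBoundary (.inl rfl))]

lemma rectBoundaryIntegral_add (hf : ContinuousOn f (rectBoundary z w))
    (hg : ContinuousOn g (rectBoundary z w)) :
    rectBoundaryIntegral (fun p => f p + g p) z w =
      rectBoundaryIntegral f z w + rectBoundaryIntegral g z w := by
  have side : ∀ {a b : ℝ} (γ : ℝ → ℂ), Continuous γ → MapsTo γ (uIcc a b) (rectBoundary z w) →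
      ∫ t in a..b, f (γ t) + g (γ t) = (∫ t in a..b, f (γ t)) + ∫ t in a..b, g (γ t) :=
    fun γ hγ hmaps => intervalIntegral.integral_add
      ((hf.comp hγ.continuousOn hmaps).intervalIntegrable)
      ((hg.comp hγ.continuousOn hmaps).intervalIntegrable)
  simp only [rectBoundaryIntegral]
  rw [side _ (by fun_prop) (mapsTo_horizontal_rectBoundary (.inl rfl)),
    side _ (by fun_prop) (mapsTo_horizontal_rectBoundary (.inr rfl)),
    side _ (by fun_prop) (mapsTo_vertical_rectBoundary (.inr rfl)),
    side _ (by fun_prop) (mapsTo_vertical_rectBoundary (.inl rfl))]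
  simp only [smul_add]
  abel

lemma rectBoundaryIntegral_const_mul (c : ℂ) :
    rectBoundaryIntegral (fun p => c * f p) z w = c * rectBoundaryIntegral f z w := by
  simp only [rectBoundaryIntegral, intervalIntegral.integral_const_mul, smul_eq_mul]
  ring

lemma rectBoundary_subset_rectangle : rectBoundary z w ⊆ Rectangle z w := by
  rintro p (⟨hre, him⟩ | ⟨hre, him⟩)
  · rcases him with h | h <;> exact ⟨hre, h ▸ by simp⟩
  · rcases hre with h | h <;> exact ⟨h ▸ by simp, him⟩

lemma reProdIm_Ioo_subset_rectangle :
    Ioo z.re w.re ×ℂ Ioo z.im w.im ⊆ Rectangle z w := fun _ hp =>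
  ⟨Icc_subset_uIcc (Ioo_subset_Icc_self hp.1), Icc_subset_uIcc (Ioo_subset_Icc_self hp.2)⟩

lemma notMem_rectBoundary (hre : z₀.re ∈ Ioo z.re w.re)
    (him : z₀.im ∈ Ioo z.im w.im) : z₀ ∉ rectBoundary z w := by
  rintro (⟨-, h⟩ | ⟨h, -⟩) <;> rcases h with h | h
  · exact him.1.ne' h
  · exact him.2.ne h
  · exact hre.1.ne' h
  · exact hre.2.ne h

/- `log (p - z₀)` is a primitive along the bottom, top and right sides and `log (z₀ - p)` along
the left side; at the two left corners these branches differ by `± πi`. -/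
lemma rectBoundaryIntegral_inv_sub (hre : z₀.re ∈ Ioo z.re w.re)
    (him : z₀.im ∈ Ioo z.im w.im) :
    rectBoundaryIntegral (fun p => (p - z₀)⁻¹) z w = 2 * π * I := by
  have hcont : ∀ {γ : ℝ → ℂ} {s : Set ℝ}, Continuous γ → (∀ t ∈ s, γ t ≠ z₀) →
      ContinuousOn (fun t => (γ t - z₀)⁻¹) s := fun hγ hs =>
    (hγ.sub continuous_const).continuousOn.inv₀ fun t ht => sub_ne_zero.mpr (hs t ht)
  have horiz : ∀ y : ℝ, y ≠ z₀.im → ∫ x in z.re..w.re, ((x + y * I : ℂ) - z₀)⁻¹ =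
      log (w.re + y * I - z₀) - log (z.re + y * I - z₀) := fun y hy =>
    integral_horizontal_eq_sub_of_hasDerivAt (F := fun p => log (p - z₀))
      (f := fun p => (p - z₀)⁻¹)
      (fun x _ => hasDerivAt_log_sub (mem_slitPlane_iff.mpr (.inr (by simpa [sub_eq_zero]))))
      (hcont (γ := fun x : ℝ => x + y * I) (by fun_prop)
        fun x _ h => hy (by simpa using congr_arg im h))
  have right := integral_vertical_eq_sub_of_hasDerivAt (F := fun p => log (p - z₀))
    (f := fun p => (p - z₀)⁻¹) (x := w.re) (c := z.im) (e := w.im)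
    (fun y _ => hasDerivAt_log_sub (mem_slitPlane_iff.mpr (.inl (by simpa using hre.2))))
    (hcont (γ := fun y : ℝ => w.re + y * I) (by fun_prop)
      fun y _ h => hre.2.ne' (by simpa using congr_arg re h))
  have left := integral_vertical_eq_sub_of_hasDerivAt (F := fun p => log (z₀ - p))
    (f := fun p => (p - z₀)⁻¹) (x := z.re) (c := z.im) (e := w.im)
    (fun y _ => hasDerivAt_log_const_sub (mem_slitPlane_iff.mpr (.inl (by simpa using hre.1))))
    (hcont (γ := fun y : ℝ => z.re + y * I) (by fun_prop)
      fun y _ h => hre.1.ne (by simpa using congr_arg re h))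
  rw [rectBoundaryIntegral, horiz _ him.1.ne, horiz _ him.2.ne', right, left]
  have top := log_sub_log_neg_of_im_pos (u := z.re + w.im * I - z₀) (by simpa using him.2)
  have bot := log_sub_log_neg_of_im_pos (u := z₀ - (z.re + z.im * I)) (by simpa using him.1)
  rw [neg_sub] at top bot
  linear_combination top + bot

lemma rectBoundaryIntegral_mul_inv_sub {A : ℂ → ℂ}
    (hre : z₀.re ∈ Ioo z.re w.re) (him : z₀.im ∈ Ioo z.im w.im)
    (hA : ContinuousOn A (Rectangle z w))
    (hA' : DifferentiableOn ℂ A (Ioo z.re w.re ×ℂ Ioo z.im w.im)) :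
    rectBoundaryIntegral (fun p => A p * (p - z₀)⁻¹) z w = 2 * π * I * A z₀ := by
  have hopen : IsOpen (Ioo z.re w.re ×ℂ Ioo z.im w.im) := isOpen_Ioo.reProdIm isOpen_Ioo
  have hAz₀ : DifferentiableAt ℂ A z₀ := hA'.differentiableAt (hopen.mem_nhds ⟨hre, him⟩)
  have hz₀ := notMem_rectBoundary hre him
  have hsplit : EqOn (fun p => A p * (p - z₀)⁻¹) (fun p => dslope A z₀ p + A z₀ * (p - z₀)⁻¹)
      (rectBoundary z w) := fun p hp => by
    have hp : p - z₀ ≠ 0 := sub_ne_zero.mpr (ne_of_mem_of_not_mem hp hz₀)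
    simp only [dslope_of_ne A (sub_ne_zero.mp hp), slope_def_field]
    field_simp
    ring
  have hdslope : ContinuousOn (dslope A z₀) (Rectangle z w) := fun p hp => by
    rcases eq_or_ne p z₀ with rfl | hne
    · exact (continuousAt_dslope_same.mpr hAz₀).continuousWithinAt
    · exact (continuousWithinAt_dslope_of_ne hne).mpr (hA p hp)
  have hgoursat : rectBoundaryIntegral (dslope A z₀) z w = 0 := by
    have hzw : z.re ≤ w.re ∧ z.im ≤ w.im := ⟨(hre.1.trans hre.2).le, (him.1.trans him.2).le⟩
    refine integral_boundary_rect_eq_zero_of_differentiable_on_off_countable _ z w {z₀}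
      (countable_singleton z₀) hdslope fun p hp => ?_
    rw [min_eq_left hzw.1, max_eq_right hzw.1, min_eq_left hzw.2, max_eq_right hzw.2] at hp
    exact (differentiableAt_dslope_of_ne hp.2).mpr (hA'.differentiableAt (hopen.mem_nhds hp.1))
  have hpole : ContinuousOn (fun p => A z₀ * (p - z₀)⁻¹) (rectBoundary z w) :=
    continuousOn_const.mul <| (continuousOn_id.sub continuousOn_const).inv₀ fun p hp =>
      sub_ne_zero.mpr (ne_of_mem_of_not_mem hp hz₀)
  rw [rectBoundaryIntegral_congr hsplit,
    rectBoundaryIntegral_add (hdslope.mono rectBoundary_subset_rectangle) hpole,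
    hgoursat, rectBoundaryIntegral_const_mul, rectBoundaryIntegral_inv_sub hre him]
  ring

lemma rectBoundaryIntegral_mul_inv_of_simple_zero {q : ℂ → ℂ} {q' : ℂ}
    (hre : z₀.re ∈ Ioo z.re w.re) (him : z₀.im ∈ Ioo z.im w.im)
    (hg : ContinuousOn g (Rectangle z w))
    (hg' : DifferentiableOn ℂ g (Ioo z.re w.re ×ℂ Ioo z.im w.im))
    (hq : Differentiable ℂ q) (hqz₀ : q z₀ = 0) (hq' : HasDerivAt q q' z₀) (hq'0 : q' ≠ 0)
    (hq_ne : ∀ p ∈ Rectangle z w, p ≠ z₀ → q p ≠ 0) :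
    rectBoundaryIntegral (fun p => g p * (q p)⁻¹) z w = 2 * π * I * (g z₀ / q') := by
  set d := dslope q z₀
  have hd : Differentiable ℂ d :=
    differentiableOn_univ.mp ((differentiableOn_dslope univ_mem).mpr hq.differentiableOn)
  have hqd : ∀ p, q p = (p - z₀) * d p := fun p => by
    simpa [hqz₀] using (sub_smul_dslope q z₀ p).symm
  have hdz₀ : d z₀ = q' := by simp only [d, dslope_same, hq'.deriv]
  have hd_ne : ∀ p ∈ Rectangle z w, d p ≠ 0 := fun p hp => by
    rcases eq_or_ne p z₀ with rfl | hne
    · rwa [hdz₀]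
    · exact right_ne_zero_of_mul (hqd p ▸ hq_ne p hp hne)
  have hfun : (fun p => g p * (q p)⁻¹) = fun p => g p * (d p)⁻¹ * (p - z₀)⁻¹ := by
    ext p
    rw [hqd, mul_inv]
    ring
  rw [hfun, rectBoundaryIntegral_mul_inv_sub (A := fun p => g p * (d p)⁻¹) hre him
    (hg.mul (hd.continuous.continuousOn.inv₀ hd_ne))
    (hg'.mul (hd.differentiableOn.inv fun p hp =>
      hd_ne p (reProdIm_Ioo_subset_rectangle hp))), hdz₀]
  ring

lemma tendsto_rectBoundaryIntegral_strip {c e : ℝ}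
    (hc : Integrable fun x : ℝ => f (x + c * I)) (he : Integrable fun x : ℝ => f (x + e * I))
    (hv : Tendsto (fun u : ℝ => ∫ y in c..e, f (u + y * I)) (cocompact ℝ) (𝓝 0)) :
    Tendsto (fun R : ℝ => rectBoundaryIntegral f ⟨-R, c⟩ ⟨R, e⟩) atTop
      (𝓝 ((∫ x : ℝ, f (x + c * I)) - ∫ x : ℝ, f (x + e * I))) := by
  have bottom := intervalIntegral_tendsto_integral hc tendsto_neg_atTop_atBot tendsto_id
  have top := intervalIntegral_tendsto_integral he tendsto_neg_atTop_atBot tendsto_id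
  have right := hv.comp (tendsto_id.mono_right atTop_le_cocompact)
  have left := hv.comp (tendsto_neg_atTop_atBot.mono_right atBot_le_cocompact)
  simpa [rectBoundaryIntegral] using
    ((bottom.sub top).add (right.const_smul I)).sub (left.const_smul I)

end RectBoundary

noncomputable def fermiIntegrand (G : ℂ → ℂ) (T k : ℝ) (p : ℂ) : ℂ :=
  G p * exp (I * p * T) * (1 + exp (k - p))⁻¹

noncomputable def fermiPole (k : ℝ) (n : ℕ) : ℂ := k + 2 * π * I * (n + 1 / 2)

@[simp] lemma fermiPole_re (k : ℝ) (n : ℕ) : (fermiPole k n).re = k := by simp [fermiPole]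

@[simp] lemma fermiPole_im (k : ℝ) (n : ℕ) : (fermiPole k n).im = 2 * π * (n + 1 / 2) := by
  simp [fermiPole]

lemma exp_sub_fermiPole (k : ℝ) (n : ℕ) : exp (k - fermiPole k n) = -1 := by
  have : (k : ℂ) - fermiPole k n = -(π * I) + -(n * (2 * π * I)) := by
    simp only [fermiPole]; ring
  rw [this, exp_add, exp_neg, exp_neg, exp_pi_mul_I, exp_nat_mul_two_pi_mul_I]
  norm_num

lemma one_add_exp_sub_eq (k : ℝ) (n : ℕ) (p : ℂ) :
    1 + exp (k - p) = 1 - exp (fermiPole k n - p) := by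
  rw [show (k : ℂ) - p = (k - fermiPole k n) + (fermiPole k n - p) by ring, exp_add,
    exp_sub_fermiPole]
  ring

lemma hasDerivAt_one_add_exp_sub_fermiPole (k : ℝ) (n : ℕ) :
    HasDerivAt (fun p => 1 + exp (k - p)) 1 (fermiPole k n) := by
  have := (((hasDerivAt_id (fermiPole k n)).const_sub (k : ℂ)).cexp).const_add 1
  simpa [exp_sub_fermiPole] using this

lemma one_add_exp_sub_ne_zero {k : ℝ} {n : ℕ} {p : ℂ}
    (him : p.im ∈ Icc (2 * π * n) (2 * π * (n + 1)))
    (hp : p ≠ fermiPole k n) : 1 + exp (k - p) ≠ 0 := by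
  rw [one_add_exp_sub_eq k n, sub_ne_zero, ne_comm]
  refine fun h => hp (sub_eq_zero.mp (eq_zero_of_exp_eq_one h ?_)).symm
  rw [sub_im, fermiPole_im, abs_lt]
  constructor <;> nlinarith [him.1, him.2, Real.pi_pos]

lemma one_le_norm_one_add_exp_sub_horizontal (k x : ℝ) (n : ℕ) :
    1 ≤ ‖1 + exp (k - (x + (2 * π * n : ℝ) * I))‖ := by
  refine le_trans ?_ (re_le_norm _)
  have : Real.cos (2 * π * n) = 1 := by rw [mul_comm]; exact Real.cos_nat_mul_two_pi n
  simp [exp_re, this, (Real.exp_pos _).le]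

lemma half_le_norm_one_add_exp_sub {k : ℝ} {p : ℂ} (h : 1 ≤ |p.re - k|) :
    1 / 2 ≤ ‖1 + exp (k - p)‖ := by
  have hnorm : ‖exp (k - p)‖ = Real.exp (k - p.re) := by simp [norm_exp]
  have htri := abs_norm_sub_norm_le (1 : ℂ) (-exp (k - p))
  rw [norm_neg, hnorm, norm_one, sub_neg_eq_add] at htri
  have he : 2 ≤ Real.exp 1 := by linarith [Real.add_one_le_exp 1]
  rcases le_abs'.mp h with h | h
  · have : Real.exp 1 ≤ Real.exp (k - p.re) := Real.exp_le_exp.mpr (by linarith)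
    linarith [neg_abs_le (1 - Real.exp (k - p.re))]
  · have : Real.exp (k - p.re) ≤ Real.exp (-1) := Real.exp_le_exp.mpr (by linarith)
    have : Real.exp (-1) ≤ 1 / 2 := by
      rw [Real.exp_neg, inv_le_comm₀ (Real.exp_pos 1) (by norm_num)]
      linarith
    linarith [le_abs_self (1 - Real.exp (k - p.re))]

lemma exp_I_mul_fermiPole_mul (k T : ℝ) (n : ℕ) :
    exp (I * fermiPole k n * T) = exp (I * k * T) * exp (-(2 * π * (n + 1 / 2) * T)) := by
  rw [← exp_add, fermiPole]
  congr 1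
  linear_combination (2 * π * (n + 1 / 2) * T : ℂ) * I_sq

section FermiIntegrand

variable {G : ℂ → ℂ} {φ : ℝ → ℝ} {c₁ T k : ℝ}

lemma rectBoundaryIntegral_fermiIntegrand (hG_cont : ContinuousOn G {z : ℂ | 0 ≤ z.im})
    (hG_diff : DifferentiableOn ℂ G {z : ℂ | 0 < z.im}) (n : ℕ) {R : ℝ} (hR : |k| < R) :
    rectBoundaryIntegral (fermiIntegrand G T k) ⟨-R, 2 * π * n⟩ ⟨R, 2 * π * (n + 1)⟩ =
      2 * π * I * (G (fermiPole k n) * exp (I * fermiPole k n * T)) := by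
  have hn : 0 ≤ 2 * π * n := by positivity
  have hrect : Rectangle ⟨-R, 2 * π * n⟩ ⟨R, 2 * π * (n + 1)⟩ ⊆
      {p : ℂ | p.im ∈ Icc (2 * π * n) (2 * π * (n + 1))} := fun p hp => by
    simpa [uIcc_of_le (by nlinarith [Real.pi_pos] : 2 * π * n ≤ 2 * π * (n + 1))] using hp.2
  have hre : (fermiPole k n).re ∈ Ioo (-R) R := by
    simpa using abs_lt.mp hR
  have him : (fermiPole k n).im ∈ Ioo (2 * π * n) (2 * π * (n + 1)) := by
    simp only [fermiPole_im]
    constructor <;> nlinarith [Real.pi_pos]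
  have hres := rectBoundaryIntegral_mul_inv_of_simple_zero (g := fun p => G p * exp (I * p * T))
    hre him
    ((hG_cont.mono fun p hp => hn.trans (hrect hp).1).mul (by fun_prop))
    ((hG_diff.mono fun p hp => hn.trans_lt hp.2.1).mul (by fun_prop))
    (by fun_prop) (by simp [one_add_exp_sub_eq k n]) (hasDerivAt_one_add_exp_sub_fermiPole k n)
    one_ne_zero fun p hp => one_add_exp_sub_ne_zero (hrect hp)
  rwa [div_one] at hres

lemma norm_mul_exp_I_mul_le
    (hG_bound : ∀ z : ℂ, 0 ≤ z.im → ‖G z‖ ≤ φ z.re * Real.exp (c₁ * z.im))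
    {p : ℂ} (hp : 0 ≤ p.im) :
    ‖G p * exp (I * p * T)‖ ≤ φ p.re * Real.exp ((c₁ - T) * p.im) := by
  have hexp : ‖exp (I * p * T)‖ = Real.exp (-(T * p.im)) := by simp [norm_exp]; ring_nf
  rw [norm_mul, hexp, sub_mul, sub_eq_add_neg, Real.exp_add, ← mul_assoc]
  exact mul_le_mul_of_nonneg_right (hG_bound p hp) (Real.exp_pos _).le

lemma norm_fermiIntegrand_horizontal_le
    (hG_bound : ∀ z : ℂ, 0 ≤ z.im → ‖G z‖ ≤ φ z.re * Real.exp (c₁ * z.im)) (n : ℕ) (x : ℝ) :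
    ‖fermiIntegrand G T k (x + (2 * π * n : ℝ) * I)‖ ≤
      φ x * Real.exp ((c₁ - T) * (2 * π * n)) := by
  have hbound := norm_mul_exp_I_mul_le (T := T) hG_bound
    (p := x + (2 * π * n : ℝ) * I) (by simp; positivity)
  simp only [add_re, ofReal_re, mul_re, I_re, mul_zero, ofReal_im, I_im, mul_one, sub_self,
    add_zero, add_im, mul_im, zero_add] at hbound
  rw [fermiIntegrand, norm_mul, norm_inv]
  exact (mul_le_of_le_one_right (norm_nonneg _)
    (inv_le_one_of_one_le₀ (one_le_norm_one_add_exp_sub_horizontal k x n))).trans hbound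

lemma norm_fermiIntegrand_le_of_one_le_abs (hφ_nonneg : ∀ x, 0 ≤ φ x) (hT : c₁ < T)
    (hG_bound : ∀ z : ℂ, 0 ≤ z.im → ‖G z‖ ≤ φ z.re * Real.exp (c₁ * z.im))
    {p : ℂ} (hp : 0 ≤ p.im) (hk : 1 ≤ |p.re - k|) :
    ‖fermiIntegrand G T k p‖ ≤ 2 * φ p.re := by
  have hexp : Real.exp ((c₁ - T) * p.im) ≤ 1 :=
    Real.exp_le_one_iff.mpr (mul_nonpos_of_nonpos_of_nonneg (by linarith) hp)
  have hq : ‖1 + exp (k - p)‖⁻¹ ≤ 2 := by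
    simpa using inv_anti₀ (by norm_num) (half_le_norm_one_add_exp_sub hk)
  rw [fermiIntegrand, norm_mul, norm_inv, mul_comm 2]
  exact mul_le_mul
    ((norm_mul_exp_I_mul_le hG_bound hp).trans (mul_le_of_le_one_right (hφ_nonneg _) hexp))
    hq (by positivity) (hφ_nonneg _)

lemma continuous_fermiIntegrand_horizontal (hG_cont : ContinuousOn G {z : ℂ | 0 ≤ z.im})
    (n : ℕ) : Continuous fun x : ℝ => fermiIntegrand G T k (x + (2 * π * n : ℝ) * I) := by
  refine ((hG_cont.comp_continuous (by fun_prop) fun x => ?_).mul (by fun_prop)).mul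
    (Continuous.inv₀ (by fun_prop) fun x h => ?_)
  · show 0 ≤ (_ : ℂ).im
    simp only [add_im, ofReal_im, mul_im, ofReal_re, I_im, mul_one, I_re, mul_zero, add_zero,
      zero_add]
    positivity
  · have := one_le_norm_one_add_exp_sub_horizontal k x n
    rw [h, norm_zero] at this
    exact absurd this zero_lt_one.not_ge

lemma integrable_fermiIntegrand_horizontal (hG_cont : ContinuousOn G {z : ℂ | 0 ≤ z.im})
    (hφ_int : Integrable φ)
    (hG_bound : ∀ z : ℂ, 0 ≤ z.im → ‖G z‖ ≤ φ z.re * Real.exp (c₁ * z.im)) (n : ℕ) :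
    Integrable fun x : ℝ => fermiIntegrand G T k (x + (2 * π * n : ℝ) * I) :=
  (hφ_int.mul_const _).mono' (continuous_fermiIntegrand_horizontal hG_cont n).aestronglyMeasurable
    (.of_forall (norm_fermiIntegrand_horizontal_le hG_bound n))

lemma tendsto_integral_fermiIntegrand_vertical (hφ_nonneg : ∀ x, 0 ≤ φ x) (hT : c₁ < T)
    (hφ_decay : Tendsto φ (cocompact ℝ) (𝓝 0))
    (hG_bound : ∀ z : ℂ, 0 ≤ z.im → ‖G z‖ ≤ φ z.re * Real.exp (c₁ * z.im))
    {c e : ℝ} (hc : 0 ≤ c) (he : 0 ≤ e) :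
    Tendsto (fun u : ℝ => ∫ y in c..e, fermiIntegrand G T k (u + y * I)) (cocompact ℝ) (𝓝 0) := by
  have hfar : ∀ᶠ u : ℝ in cocompact ℝ, |k| + 1 ≤ ‖u‖ :=
    tendsto_norm_cocompact_atTop.eventually_ge_atTop _
  refine squeeze_zero_norm' (a := fun u => 2 * φ u * |e - c|) ?_ ?_
  · filter_upwards [hfar] with u hu
    refine intervalIntegral.norm_integral_le_of_norm_le_const fun y hy => ?_
    have hy : 0 ≤ y := (le_min hc he).trans (uIoc_subset_uIcc hy).1
    have hk : 1 ≤ |u - k| := by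
      rw [Real.norm_eq_abs] at hu
      linarith [abs_sub_abs_le_abs_sub u k]
    simpa using norm_fermiIntegrand_le_of_one_le_abs hφ_nonneg hT hG_bound
      (p := u + y * I) (by simpa using hy) (by simpa using hk)
  · simpa using (hφ_decay.const_mul 2).mul_const |e - c|

lemma tendsto_integral_fermiIntegrand_horizontal (hT : c₁ < T) (hφ_int : Integrable φ)
    (hG_bound : ∀ z : ℂ, 0 ≤ z.im → ‖G z‖ ≤ φ z.re * Real.exp (c₁ * z.im)) :
    Tendsto (fun n : ℕ => ∫ x : ℝ, fermiIntegrand G T k (x + (2 * π * n : ℝ) * I)) atTop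
      (𝓝 0) := by
  refine squeeze_zero_norm (fun n => ?_) (a := fun n : ℕ => (∫ x, φ x) *
    Real.exp ((c₁ - T) * (2 * π * n))) ?_
  · rw [← integral_mul_const]
    exact norm_integral_le_of_norm_le (hφ_int.mul_const _)
      (.of_forall (norm_fermiIntegrand_horizontal_le hG_bound n))
  · have hexp : Tendsto (fun n : ℕ => (c₁ - T) * (2 * π * n)) atTop atBot :=
      (tendsto_natCast_atTop_atTop.const_mul_atTop Real.two_pi_pos).const_mul_atTop_of_neg
        (by linarith)
    simpa using (Real.tendsto_exp_atBot.comp hexp).const_mul (∫ x, φ x)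

lemma integral_fermiIntegrand_horizontal_sub_succ (hG_cont : ContinuousOn G {z : ℂ | 0 ≤ z.im})
    (hG_diff : DifferentiableOn ℂ G {z : ℂ | 0 < z.im}) (hφ_nonneg : ∀ x, 0 ≤ φ x)
    (hT : c₁ < T) (hφ_int : Integrable φ) (hφ_decay : Tendsto φ (cocompact ℝ) (𝓝 0))
    (hG_bound : ∀ z : ℂ, 0 ≤ z.im → ‖G z‖ ≤ φ z.re * Real.exp (c₁ * z.im)) (n : ℕ) :
    (∫ x : ℝ, fermiIntegrand G T k (x + (2 * π * n : ℝ) * I)) -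
        ∫ x : ℝ, fermiIntegrand G T k (x + (2 * π * (n + 1 : ℕ) : ℝ) * I) =
      2 * π * I * (G (fermiPole k n) * exp (I * fermiPole k n * T)) := by
  have hlim := tendsto_rectBoundaryIntegral_strip (f := fermiIntegrand G T k)
    (integrable_fermiIntegrand_horizontal hG_cont hφ_int hG_bound n)
    (integrable_fermiIntegrand_horizontal hG_cont hφ_int hG_bound (n + 1))
    (tendsto_integral_fermiIntegrand_vertical hφ_nonneg hT hφ_decay hG_bound (by positivity)
      (by positivity))
  refine tendsto_nhds_unique hlim (tendsto_const_nhds.congr' ?_)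
  filter_upwards [eventually_gt_atTop |k|] with R hR
  rw [← rectBoundaryIntegral_fermiIntegrand hG_cont hG_diff n hR]
  push_cast
  rfl

lemma summable_norm_fermiSeries (hT : c₁ < T)
    (hG_bound : ∀ z : ℂ, 0 ≤ z.im → ‖G z‖ ≤ φ z.re * Real.exp (c₁ * z.im)) :
    Summable fun n : ℕ => ‖G (fermiPole k n) * exp (-(2 * π * (n + 1 / 2) * T))‖ := by
  have hbound : ∀ n : ℕ, ‖G (fermiPole k n) * exp (-(2 * π * (n + 1 / 2) * T))‖ ≤
      φ k * Real.exp ((c₁ - T) * (2 * π * (n + 1 / 2))) := fun n => by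
    have := norm_mul_exp_I_mul_le (T := T) hG_bound (p := fermiPole k n)
      (by simp only [fermiPole_im]; positivity)
    rw [exp_I_mul_fermiPole_mul, mul_left_comm, norm_mul (exp _), fermiPole_re,
      fermiPole_im] at this
    simpa [norm_exp] using this
  refine .of_nonneg_of_le (fun _ => norm_nonneg _) hbound
    ((Real.summable_exp_nat_mul_of_ge (by linarith) fun n => ?_).mul_left _)
  nlinarith [Real.pi_gt_three, (n.cast_nonneg : (0 : ℝ) ≤ n)]

end FermiIntegrand

theorem residue_sum_formula_general (c₁ T : ℝ) (hT : c₁ < T) (k : ℝ)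
    (G : ℂ → ℂ)
    (hG_cont : ContinuousOn G {z : ℂ | 0 ≤ z.im})
    (hG_diff : DifferentiableOn ℂ G {z : ℂ | 0 < z.im})
    (φ : ℝ → ℝ) (hφ_nonneg : ∀ x, 0 ≤ φ x) (hφ_int : Integrable φ)
    (hφ_decay : Tendsto φ (cocompact ℝ) (nhds 0))
    (hG_bound : ∀ z : ℂ, 0 ≤ z.im → ‖G z‖ ≤ φ z.re * Real.exp (c₁ * z.im)) :
    Integrable (fun p : ℝ =>
        G (p : ℂ) * Complex.exp (Complex.I * (p : ℂ) * (T : ℂ)) *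
          (1 + Complex.exp ((k : ℂ) - (p : ℂ)))⁻¹) ∧
    Summable (fun n : ℕ =>
        ‖(G ((k : ℂ) + 2 * Real.pi * Complex.I * ((n : ℂ) + 1 / 2)) *
          Complex.exp (-(2 * Real.pi * ((n : ℂ) + 1 / 2) * (T : ℂ))))‖) ∧
    (∫ p : ℝ, G (p : ℂ) * Complex.exp (Complex.I * (p : ℂ) * (T : ℂ)) *
        (1 + Complex.exp ((k : ℂ) - (p : ℂ)))⁻¹) =
      2 * Real.pi * Complex.I * Complex.exp (Complex.I * (k : ℂ) * (T : ℂ)) *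
        ∑' n : ℕ, G ((k : ℂ) + 2 * Real.pi * Complex.I * ((n : ℂ) + 1 / 2)) *
          Complex.exp (-(2 * Real.pi * ((n : ℂ) + 1 / 2) * (T : ℂ))) := by
  have hsum := summable_norm_fermiSeries (k := k) hT hG_bound
  have htelescope := hasSum_of_sub_succ (hsum.of_norm.mul_left (2 * π * I * exp (I * k * T)))
    (fun n => by
      rw [integral_fermiIntegrand_horizontal_sub_succ hG_cont hG_diff hφ_nonneg hT hφ_int
        hφ_decay hG_bound n, exp_I_mul_fermiPole_mul]
      ring)
    (tendsto_integral_fermiIntegrand_horizontal hT hφ_int hG_bound)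
  have hline := integrable_fermiIntegrand_horizontal (T := T) (k := k) hG_cont hφ_int hG_bound 0
  simp only [CharP.cast_eq_zero, mul_zero, ofReal_zero, zero_mul, add_zero] at hline htelescope
  exact ⟨hline, hsum, by rw [← tsum_mul_left]; exact htelescope.tsum_eq.symm⟩

theorem residue_sum_formula (c₁ T : ℝ) (hc₁ : 0 ≤ c₁) (hT : c₁ < T) (k : ℝ)
    (G : ℂ → ℂ)
    (hG_cont : ContinuousOn G {z : ℂ | 0 ≤ z.im})
    (hG_diff : DifferentiableOn ℂ G {z : ℂ | 0 < z.im})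
    (φ : ℝ → ℝ) (hφ_nonneg : ∀ x, 0 ≤ φ x) (hφ_int : Integrable φ)
    (hφ_decay : Tendsto φ (cocompact ℝ) (nhds 0))
    (hG_bound : ∀ z : ℂ, 0 ≤ z.im → ‖G z‖ ≤ φ z.re * Real.exp (c₁ * z.im)) :
    Integrable (fun p : ℝ =>
        G (p : ℂ) * Complex.exp (Complex.I * (p : ℂ) * (T : ℂ)) *
          (1 + Complex.exp ((k : ℂ) - (p : ℂ)))⁻¹) ∧
    Summable (fun n : ℕ =>
        ‖(G ((k : ℂ) + 2 * Real.pi * Complex.I * ((n : ℂ) + 1 / 2)) *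
          Complex.exp (-(2 * Real.pi * ((n : ℂ) + 1 / 2) * (T : ℂ))))‖) ∧
    (∫ p : ℝ, G (p : ℂ) * Complex.exp (Complex.I * (p : ℂ) * (T : ℂ)) *
        (1 + Complex.exp ((k : ℂ) - (p : ℂ)))⁻¹) =
      2 * Real.pi * Complex.I * Complex.exp (Complex.I * (k : ℂ) * (T : ℂ)) *
        ∑' n : ℕ, G ((k : ℂ) + 2 * Real.pi * Complex.I * ((n : ℂ) + 1 / 2)) *
          Complex.exp (-(2 * Real.pi * ((n : ℂ) + 1 / 2) * (T : ℂ))) :=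
  residue_sum_formula_general c₁ T hT k G hG_cont hG_diff φ hφ_nonneg hφ_int hφ_decay hG_bound
end
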